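/- arXiv:1403.1953 — 9 statements merged into one kernel-verified Lean document; each statement's English description precedes it below -/
import Mathlib

section
/- Let K ⊆ ℝ^n be a convex body and Γ ⊆ ℝ^n a nonempty compact set. Suppose there is a set 𝒩 ⊆ ℝ^n \ {0} with 0 ∈ convexHull(𝒩) and such that h(K, ν) ≤ h(Γ, ν) for every ν ∈ 𝒩. Then for every x ∈ ℝ^n the translate Γ + x is not contained in the interior of K. -/
open scoped RealInnerProductSpace Pointwise
open Metric

noncomputable section

/-- Euclidean space ℝ^n. -/
abbrev Euc (n : ℕ) := EuclideanSpace ℝ (Fin n)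

/-- The image of a closed polygon with vertices `q 0, …, q (m-1)` (indices mod `m`):
the union of the segments `[q i, q (i+1)]`. -/
def polyImage {n m : ℕ} [NeZero m] (q : Fin m → Euc n) : Set (Euc n) :=
  ⋃ i : Fin m, segment ℝ (q i) (q (i + 1))

/-- The length of a closed polygon: `∑ i, ‖q (i+1) - q i‖`. -/
noncomputable def polyLength {n m : ℕ} [NeZero m] (q : Fin m → Euc n) : ℝ :=
  ∑ i : Fin m, ‖q (i + 1) - q i‖

/-- A convex body: a compact convex set with nonempty interior. -/
def IsConvexBody {n : ℕ} (K : Set (Euc n)) : Prop :=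
  IsCompact K ∧ Convex ℝ K ∧ (interior K).Nonempty

/-- A closed polygon belongs to `𝒫⁺(K)` if no translate of its image is contained
in the interior of `K`. -/
def InPPlus {n m : ℕ} [NeZero m] (K : Set (Euc n)) (q : Fin m → Euc n) : Prop :=
  ∀ x : Euc n, ¬ ((fun p => p + x) '' polyImage q ⊆ interior K)

/-- Unit direction of the `i`-th edge of a closed polygon. -/
noncomputable def dir {n m : ℕ} [NeZero m] (q : Fin m → Euc n) (i : Fin m) : Euc n :=
  ‖q (i + 1) - q i‖⁻¹ • (q (i + 1) - q i)

/-- Outer normal `ν i = u (i-1) - u i` at the `i`-th vertex. -/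
noncomputable def normalVec {n m : ℕ} [NeZero m] (q : Fin m → Euc n) (i : Fin m) : Euc n :=
  dir q (i - 1) - dir q i

/-- A periodic billiard trajectory on a convex body `K`. -/
def IsBilliard {n m : ℕ} [NeZero m] (K : Set (Euc n)) (q : Fin m → Euc n) : Prop :=
  2 ≤ m ∧ (∀ i, q (i + 1) ≠ q i) ∧ (∀ i, q i ∈ K) ∧
    ∀ i, normalVec q i ≠ 0 ∧ ∀ x ∈ K, ⟪x - q i, normalVec q i⟫ ≤ 0

/-- Support function of a set. -/
noncomputable def suppFn {n : ℕ} (S : Set (Euc n)) (ν : Euc n) : ℝ :=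
  sSup ((fun s => ⟪s, ν⟫) '' S)

/-!
If `Γ + x ⊆ int K`, then for every direction `ν ≠ 0` a point of `Γ + x` maximising `⟪·, ν⟫`
can be pushed a little further in direction `ν` inside `K`, so
`h(Γ, ν) + ⟪x, ν⟫ < h(K, ν) ≤ h(Γ, ν)` for `ν ∈ 𝒩`, i.e. `⟪x, ν⟫ < 0` on `𝒩`. This open
half-space is convex, so it contains `convexHull 𝒩 ∋ 0`, which is absurd.
-/

open Topology

theorem exists_inner_nonneg_of_zero_mem_convexHull {E : Type*} [NormedAddCommGroup E]
    [InnerProductSpace ℝ E] {N : Set E} (h0 : (0 : E) ∈ convexHull ℝ N) (x : E) :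
    ∃ ν ∈ N, 0 ≤ ⟪x, ν⟫ := by
  by_contra! hneg
  have hconv : Convex ℝ {ν : E | ⟪x, ν⟫ < 0} :=
    convex_halfSpace_lt (innerₛₗ ℝ x).isLinear 0
  have h : ⟪x, (0 : E)⟫ < 0 := convexHull_min hneg hconv h0
  simp at h

namespace suppFn

variable {n : ℕ}

theorem eq_inner_of_isMaxOn {S : Set (Euc n)} {ν p : Euc n} (hp : p ∈ S)
    (hmax : IsMaxOn (fun s => ⟪s, ν⟫) S p) : suppFn S ν = ⟪p, ν⟫ :=
  IsGreatest.csSup_eq ⟨Set.mem_image_of_mem _ hp, by rintro _ ⟨y, hy, rfl⟩; exact hmax hy⟩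

theorem exists_eq_inner {S : Set (Euc n)} (hne : S.Nonempty) (hc : IsCompact S) (ν : Euc n) :
    ∃ p ∈ S, suppFn S ν = ⟪p, ν⟫ := by
  obtain ⟨p, hp, hmax⟩ := hc.exists_isMaxOn hne (f := fun s => ⟪s, ν⟫) (by fun_prop)
  exact ⟨p, hp, eq_inner_of_isMaxOn hp hmax⟩

theorem inner_le {S : Set (Euc n)} (hS : Bornology.IsBounded S) {y : Euc n} (hy : y ∈ S)
    (ν : Euc n) : ⟪y, ν⟫ ≤ suppFn S ν := by
  refine le_csSup ?_ (Set.mem_image_of_mem _ hy)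
  obtain ⟨R, hR⟩ := hS.subset_closedBall 0
  refine ⟨R * ‖ν‖, ?_⟩
  rintro _ ⟨s, hs, rfl⟩
  calc ⟪s, ν⟫ ≤ ‖s‖ * ‖ν‖ := real_inner_le_norm s ν
    _ ≤ R * ‖ν‖ := by gcongr; simpa using hR hs

theorem inner_lt_of_mem_interior {K : Set (Euc n)} (hK : Bornology.IsBounded K) {y ν : Euc n}
    (hy : y ∈ interior K) (hν : ν ≠ 0) : ⟪y, ν⟫ < suppFn K ν := by
  have hpath : Filter.Tendsto (fun t : ℝ => y + t • ν) (𝓝[>] 0) (𝓝 y) := by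
    have hcont : Continuous fun t : ℝ => y + t • ν := by fun_prop
    simpa using (hcont.tendsto 0).mono_left nhdsWithin_le_nhds
  obtain ⟨t, htK, ht⟩ :=
    ((hpath.eventually (mem_interior_iff_mem_nhds.mp hy)).and self_mem_nhdsWithin).exists
  have htpos : (0 : ℝ) < t := ht
  calc ⟪y, ν⟫ < ⟪y, ν⟫ + t * ‖ν‖ ^ 2 := lt_add_of_pos_right _ (by positivity)
    _ = ⟪y + t • ν, ν⟫ := by
        rw [inner_add_left, real_inner_smul_left, real_inner_self_eq_norm_sq]
    _ ≤ suppFn K ν := inner_le hK htK ν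

theorem add_inner_lt_of_translate_subset_interior {K Γ : Set (Euc n)}
    (hK : Bornology.IsBounded K) (hΓne : Γ.Nonempty) (hΓc : IsCompact Γ) {x ν : Euc n}
    (hsub : (fun p => p + x) '' Γ ⊆ interior K) (hν : ν ≠ 0) :
    suppFn Γ ν + ⟪x, ν⟫ < suppFn K ν := by
  obtain ⟨p, hp, hΓν⟩ := exists_eq_inner hΓne hΓc ν
  rw [hΓν, ← inner_add_left]
  exact inner_lt_of_mem_interior hK (hsub ⟨p, hp, rfl⟩) hν

end suppFn

open suppFn in
theorem stmt0 {n : ℕ} (K Γ : Set (Euc n)) (hK : IsConvexBody K)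
    (hΓne : Γ.Nonempty) (hΓc : IsCompact Γ)
    (N : Set (Euc n)) (hN : ∀ ν ∈ N, ν ≠ (0 : Euc n))
    (h0 : (0 : Euc n) ∈ convexHull ℝ N)
    (hsupp : ∀ ν ∈ N, suppFn K ν ≤ suppFn Γ ν) :
    ∀ x : Euc n, ¬ ((fun p => p + x) '' Γ ⊆ interior K) := by
  intro x hsub
  obtain ⟨ν, hνN, hxν⟩ := exists_inner_nonneg_of_zero_mem_convexHull h0 x
  have := add_inner_lt_of_translate_subset_interior hK.1.isBounded hΓne hΓc hsub (hN ν hνN)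
  linarith [hsupp ν hνN]
end
end

section
/- Let q_1, …, q_m be a periodic billiard trajectory on a convex body K ⊆ ℝ^n, with unit directions u_i and outer normals ν_i := u_{i−1} − u_i as in the definition, and let Γ be its image. Then 0 ∈ convexHull{ν_1, …, ν_m} and h(K, ν_i) = h(Γ, ν_i) = ⟨q_i, ν_i⟩ for every i. Consequently, for every x ∈ ℝ^n, Γ + x is not contained in the interior of K. -/
open scoped RealInnerProductSpace Pointwise
open Metric

noncomputable section

theorem stmt1 {n m : ℕ} [NeZero m] (K : Set (Euc n)) (hK : IsConvexBody K)
    (q : Fin m → Euc n) (hq : IsBilliard K q) :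
    (0 : Euc n) ∈ convexHull ℝ (Set.range (normalVec q)) ∧
    (∀ i, suppFn K (normalVec q i) = suppFn (polyImage q) (normalVec q i) ∧
      suppFn K (normalVec q i) = ⟪q i, normalVec q i⟫) ∧
    ∀ x : Euc n, ¬ ((fun p => p + x) '' polyImage q ⊆ interior K) := by
  obtain ⟨hm, hne, hmem, hnorm⟩ := hq
  have hΓK : polyImage q ⊆ K := by
    intro x hx
    simp only [polyImage, Set.mem_iUnion] at hx
    obtain ⟨i, hi⟩ := hx
    exact hK.2.1.segment_subset (hmem i) (hmem (i + 1)) hi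
  have hqΓ : ∀ i, q i ∈ polyImage q := fun i =>
    Set.mem_iUnion.2 ⟨i, left_mem_segment ℝ _ _⟩
  have hub : ∀ i, ∀ x ∈ K, ⟪x, normalVec q i⟫ ≤ ⟪q i, normalVec q i⟫ := by
    intro i x hx
    have h := (hnorm i).2 x hx
    rw [inner_sub_left] at h
    linarith
  have hsuppK : ∀ i, suppFn K (normalVec q i) = ⟪q i, normalVec q i⟫ := by
    intro i
    apply IsGreatest.csSup_eq
    refine ⟨⟨q i, hmem i, rfl⟩, ?_⟩
    rintro y ⟨x, hx, rfl⟩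
    exact hub i x hx
  have hsuppΓ : ∀ i, suppFn (polyImage q) (normalVec q i) = ⟪q i, normalVec q i⟫ := by
    intro i
    apply IsGreatest.csSup_eq
    refine ⟨⟨q i, hqΓ i, rfl⟩, ?_⟩
    rintro y ⟨x, hx, rfl⟩
    exact hub i x (hΓK hx)
  have hsum : ∑ i, normalVec q i = 0 := by
    have h1 : ∑ i : Fin m, dir q (i - 1) = ∑ i : Fin m, dir q i :=
      Fintype.sum_equiv (Equiv.subRight (1 : Fin m)) _ _ (fun i => rfl)
    simp [normalVec, Finset.sum_sub_distrib, h1]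
  refine ⟨?_, fun i => ⟨(hsuppK i).trans (hsuppΓ i).symm, hsuppK i⟩, ?_⟩
  · have h0 : (Finset.univ : Finset (Fin m)).centerMass (fun _ => (1 : ℝ)) (normalVec q) = 0 := by
      simp [Finset.centerMass, hsum]
    rw [← h0]
    refine Finset.centerMass_mem_convexHull _ (fun i _ => zero_le_one) ?_ (fun i _ => ⟨i, rfl⟩)
    have : (0 : ℝ) < (m : ℝ) := Nat.cast_pos.2 (Nat.pos_of_ne_zero (NeZero.ne m))
    simpa using this
  · intro x hsub
    have hex : ∃ i, 0 ≤ ⟪x, normalVec q i⟫ := by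
      by_contra h
      push_neg at h
      have hlt : ∑ i, ⟪x, normalVec q i⟫ < 0 :=
        Finset.sum_neg (fun i _ => h i) Finset.univ_nonempty
      rw [← inner_sum, hsum, inner_zero_right] at hlt
      linarith
    obtain ⟨i, hi⟩ := hex
    have hint : q i + x ∈ interior K := hsub ⟨q i, hqΓ i, rfl⟩
    obtain ⟨ε, hε, hball⟩ := Metric.isOpen_iff.1 isOpen_interior _ hint
    set ν := normalVec q i with hνdef
    have hν : ν ≠ 0 := (hnorm i).1
    have hνn : (0 : ℝ) < ‖ν‖ := norm_pos_iff.2 hν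
    have hz : q i + x + (ε / 2) • ‖ν‖⁻¹ • ν ∈ K := by
      apply interior_subset
      apply hball
      rw [Metric.mem_ball, dist_eq_norm]
      have : q i + x + (ε / 2) • ‖ν‖⁻¹ • ν - (q i + x) = (ε / 2) • ‖ν‖⁻¹ • ν := by abel
      rw [this, norm_smul, norm_smul, norm_inv, norm_norm, Real.norm_eq_abs,
        abs_of_pos (by linarith), inv_mul_cancel₀ (ne_of_gt hνn), mul_one]
      linarith
    have hle := hub i _ hz
    rw [inner_add_left, inner_add_left, real_inner_smul_left, real_inner_smul_left,
      real_inner_self_eq_norm_sq] at hle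
    have hkey : ‖ν‖⁻¹ * ‖ν‖ ^ 2 = ‖ν‖ := by
      field_simp
    rw [hkey] at hle
    nlinarith
end
end

section
/- Let K_1, K_2 be convex bodies in ℝ^n and let L_1, L_2 ≥ 0. Assume every closed polygon in 𝒫⁺(K_1) has length ≥ L_1 and every closed polygon in 𝒫⁺(K_2) has length ≥ L_2. Then every closed polygon in 𝒫⁺(K_1 + K_2) has length ≥ L_1 + L_2. -/
open scoped RealInnerProductSpace Pointwise
open Metric

/-!
Split the polygon `q` as `q = a • q + b • q` with `a + b = 1`. If `q` were shorter than
`L₁ + L₂`, the weights can be chosen so that `a • q` is shorter than `L₁` and `b • q` shorter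
than `L₂` (a weight is `0` when the corresponding `Lᵢ ≤ 0`, and a point polygon fits into any
body). Then a translate of `a • q` lies in `interior K₁`, one of `b • q` in `interior K₂`, and
their sum is a translate of `q` inside `interior K₁ + interior K₂ ⊆ interior (K₁ + K₂)`.
-/

section FitsIn

variable {E : Type*} [AddCommGroup E] [Module ℝ E] [TopologicalSpace E]

def FitsIn (K S : Set E) : Prop :=
  ∃ x : E, (fun p => p + x) '' S ⊆ interior K

theorem fitsIn_zero_smul {K : Set E} (hK : (interior K).Nonempty) (S : Set E) :
    FitsIn K ((0 : ℝ) • S) := by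
  obtain ⟨x, hx⟩ := hK
  refine ⟨x, ?_⟩
  rintro _ ⟨p, hp, rfl⟩
  simpa only [Set.mem_zero.mp (Set.zero_smul_set_subset S hp), zero_add] using hx

theorem FitsIn.add_smul [IsTopologicalAddGroup E] {K₁ K₂ S : Set E} {a b : ℝ}
    (h₁ : FitsIn K₁ (a • S)) (h₂ : FitsIn K₂ (b • S)) : FitsIn (K₁ + K₂) ((a + b) • S) := by
  obtain ⟨x₁, hx₁⟩ := h₁
  obtain ⟨x₂, hx₂⟩ := h₂
  refine ⟨x₁ + x₂, ?_⟩
  rintro _ ⟨_, ⟨p, hp, rfl⟩, rfl⟩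
  have hsplit : (a + b) • p + (x₁ + x₂) = (a • p + x₁) + (b • p + x₂) := by
    rw [_root_.add_smul]; abel
  simp only [hsplit]
  exact subset_interior_add
    (Set.add_mem_add (hx₁ ⟨_, Set.smul_mem_smul_set hp, rfl⟩)
      (hx₂ ⟨_, Set.smul_mem_smul_set hp, rfl⟩))

end FitsIn

section Polygon

variable {n m : ℕ} [NeZero m]

theorem inPPlus_iff_not_fitsIn {K : Set (Euc n)} {q : Fin m → Euc n} :
    InPPlus K q ↔ ¬ FitsIn K (polyImage q) :=
  not_exists.symm

theorem polyImage_smul (c : ℝ) (q : Fin m → Euc n) :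
    polyImage (c • q) = c • polyImage q := by
  simp only [polyImage, Set.smul_set_iUnion, Pi.smul_apply]
  refine Set.iUnion_congr fun i => ?_
  exact (image_segment ℝ (LinearMap.lsmul ℝ (Euc n) c).toAffineMap _ _).symm

theorem polyLength_smul (c : ℝ) (q : Fin m → Euc n) :
    polyLength (c • q) = |c| * polyLength q := by
  simp only [polyLength, Pi.smul_apply, ← smul_sub, norm_smul, Real.norm_eq_abs,
    Finset.mul_sum]

theorem fitsIn_smul_polyImage {K : Set (Euc n)} (hK : (interior K).Nonempty) {L : ℝ}
    (hL : ∀ (m : ℕ) [NeZero m] (q : Fin m → Euc n), InPPlus K q → L ≤ polyLength q)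
    (q : Fin m → Euc n) {a : ℝ} (ha : 0 ≤ a) (hshort : a = 0 ∨ a * polyLength q < L) :
    FitsIn K (a • polyImage q) := by
  rcases hshort with rfl | hlt
  · exact fitsIn_zero_smul hK _
  · by_contra hfit
    have := hL m (a • q) (inPPlus_iff_not_fitsIn.mpr (by rwa [polyImage_smul]))
    rw [polyLength_smul, abs_of_nonneg ha] at this
    linarith

end Polygon

theorem exists_weights_of_lt_add {ℓ L₁ L₂ : ℝ} (hlt : ℓ < L₁ + L₂) :
    ∃ a b : ℝ, 0 ≤ a ∧ 0 ≤ b ∧ a + b = 1 ∧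
      (a = 0 ∨ a * ℓ < L₁) ∧ (b = 0 ∨ b * ℓ < L₂) := by
  by_cases h₁ : L₁ ≤ 0
  · exact ⟨0, 1, le_rfl, zero_le_one, zero_add 1, .inl rfl, .inr (by linarith)⟩
  by_cases h₂ : L₂ ≤ 0
  · exact ⟨1, 0, zero_le_one, le_rfl, add_zero 1, .inr (by linarith), .inl rfl⟩
  push Not at h₁ h₂
  have hL : 0 < L₁ + L₂ := by linarith
  refine ⟨L₁ / (L₁ + L₂), L₂ / (L₁ + L₂), by positivity, by positivity, by field_simp,
    .inr ?_, .inr ?_⟩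
  · calc L₁ / (L₁ + L₂) * ℓ < L₁ / (L₁ + L₂) * (L₁ + L₂) := by gcongr
      _ = L₁ := div_mul_cancel₀ _ hL.ne'
  · calc L₂ / (L₁ + L₂) * ℓ < L₂ / (L₁ + L₂) * (L₁ + L₂) := by gcongr
      _ = L₂ := div_mul_cancel₀ _ hL.ne'

theorem stmt3_general {n : ℕ} (K₁ K₂ : Set (Euc n))
    (hK₁ : IsConvexBody K₁) (hK₂ : IsConvexBody K₂)
    (L₁ L₂ : ℝ)
    (h₁ : ∀ (m : ℕ) [NeZero m] (q : Fin m → Euc n), InPPlus K₁ q → L₁ ≤ polyLength q)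
    (h₂ : ∀ (m : ℕ) [NeZero m] (q : Fin m → Euc n), InPPlus K₂ q → L₂ ≤ polyLength q) :
    ∀ (m : ℕ) [NeZero m] (q : Fin m → Euc n),
      InPPlus (K₁ + K₂) q → L₁ + L₂ ≤ polyLength q := by
  intro m _ q hq
  by_contra! hlt
  obtain ⟨a, b, ha, hb, hab, hshort₁, hshort₂⟩ := exists_weights_of_lt_add hlt
  have hfit := (fitsIn_smul_polyImage hK₁.2.2 h₁ q ha hshort₁).add_smul
    (fitsIn_smul_polyImage hK₂.2.2 h₂ q hb hshort₂)
  rw [hab, one_smul] at hfit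
  exact inPPlus_iff_not_fitsIn.mp hq hfit

theorem stmt3 {n : ℕ} (K₁ K₂ : Set (Euc n))
    (hK₁ : IsConvexBody K₁) (hK₂ : IsConvexBody K₂)
    (L₁ L₂ : ℝ) (hL₁ : 0 ≤ L₁) (hL₂ : 0 ≤ L₂)
    (h₁ : ∀ (m : ℕ) [NeZero m] (q : Fin m → Euc n), InPPlus K₁ q → L₁ ≤ polyLength q)
    (h₂ : ∀ (m : ℕ) [NeZero m] (q : Fin m → Euc n), InPPlus K₂ q → L₂ ≤ polyLength q) :
    ∀ (m : ℕ) [NeZero m] (q : Fin m → Euc n),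
      InPPlus (K₁ + K₂) q → L₁ + L₂ ≤ polyLength q :=
  stmt3_general K₁ K₂ hK₁ hK₂ L₁ L₂ h₁ h₂
end

section
/- Let B = closedBall(c, r) ⊆ ℝ^n with r > 0. Then every periodic billiard trajectory on B has length ≥ 4r. -/
open scoped RealInnerProductSpace Pointwise
open Metric

noncomputable section

/-!
By Abel summation the length of the trajectory is `∑ ⟪q i - c, ν i⟫`, and since `ν i` is an
outer normal of the ball at `q i`, each term is at least `r ‖ν i‖`. The normals
`ν i = u (i - 1) - u i` are the edges of the closed polygon formed by the unit edge directions
`u i`, and `∑ ‖q (i + 1) - q i‖ • u i = 0` shows that this polygon lies in no open hemisphere.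
Let `p` be the point halfway along that polygon from `u 0`; every vertex `u i` lies on one of
the two halves, so `‖u i - u 0‖ + ‖u i - p‖` is at most half its length. Choosing `u i` with
`⟪u 0 + p, u i⟫ ≤ 0` makes this sum at least `2`, hence `∑ ‖ν i‖ ≥ 4`.
-/

open Finset

theorem Monotone.exists_le_and_le_succ {α : Type*} [LinearOrder α] {C : ℕ → α} (hC : Monotone C)
    {x : α} {N : ℕ} (h0 : C 0 ≤ x) (hN : x ≤ C N) : ∃ k, C k ≤ x ∧ x ≤ C (k + 1) := by
  classical
  have hex : ∃ k, x ≤ C (k + 1) := ⟨N, hN.trans (hC N.le_succ)⟩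
  refine ⟨Nat.find hex, ?_, Nat.find_spec hex⟩
  rcases h : Nat.find hex with _ | j
  · exact h0
  · exact le_of_not_ge (Nat.find_min hex (by omega : j < Nat.find hex))

section ClosedPolygon

variable {E : Type*} [NormedAddCommGroup E] [NormedSpace ℝ E]

theorem exists_dist_add_dist_le_half_length (u : ℕ → E) {m : ℕ} (hum : u m = u 0) :
    ∃ p : E, ∀ i ≤ m,
      dist (u i) (u 0) + dist (u i) p ≤ (∑ j ∈ range m, dist (u j) (u (j + 1))) / 2 := by
  set C : ℕ → ℝ := fun i => ∑ j ∈ range i, dist (u j) (u (j + 1)) with hC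
  have arc : ∀ a b, a ≤ b → dist (u a) (u b) ≤ C b - C a := fun a b hab => by
    simpa only [hC, ← sum_Ico_eq_sub _ hab] using dist_le_Ico_sum_dist u hab
  have hC0 : C 0 = 0 := by simp [hC]
  have hCmono : Monotone C := fun a b hab => by
    linarith [arc a b hab, dist_nonneg (x := u a) (y := u b)]
  have hCm : 0 ≤ C m := hC0 ▸ hCmono m.zero_le
  obtain ⟨k, hk, hk1⟩ := hCmono.exists_le_and_le_succ (x := C m / 2) (N := m)
    (by linarith) (by linarith)
  obtain ⟨p, hpk, hpk1⟩ := exists_dist_le_le (x := u k) (z := u (k + 1))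
    (sub_nonneg.2 hk) (sub_nonneg.2 hk1) (by linarith [arc k (k + 1) k.le_succ])
  refine ⟨p, fun i him => ?_⟩
  rcases le_or_gt i k with hik | hki
  · have h0 := arc 0 i i.zero_le
    have hp := dist_triangle (u i) (u k) p
    linarith [arc i k hik, dist_comm (u i) (u 0)]
  · have hm := arc i m him
    have hp := dist_triangle (u i) (u (k + 1)) p
    rw [hum] at hm
    linarith [arc (k + 1) i hki, dist_comm (u (k + 1)) (u i), dist_comm p (u (k + 1))]

end ClosedPolygon

section InnerProduct

variable {E : Type*} [NormedAddCommGroup E] [InnerProductSpace ℝ E]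

theorem one_sub_inner_le_dist {x : E} (hx : ‖x‖ = 1) (y : E) : 1 - ⟪y, x⟫ ≤ dist x y := by
  have h := real_inner_le_norm (x - y) x
  rw [inner_sub_left, real_inner_self_eq_norm_sq, hx, one_pow, mul_one] at h
  rw [dist_eq_norm]
  linarith

theorem exists_inner_nonpos_of_sum_smul_eq_zero {ι : Type*} [Fintype ι] [Nonempty ι]
    {v : ι → E} {l : ι → ℝ} (hl : ∀ i, 0 < l i) (hv : ∑ i, l i • v i = 0) (w : E) :
    ∃ i, ⟪w, v i⟫ ≤ 0 := by
  by_contra! h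
  have hpos : 0 < ∑ i, l i * ⟪w, v i⟫ :=
    sum_pos (fun i _ => mul_pos (hl i) (h i)) univ_nonempty
  simp_rw [← real_inner_smul_right, ← inner_sum, hv, inner_zero_right] at hpos
  exact hpos.false

theorem mul_norm_le_inner_of_forall_mem_closedBall {c x ν : E} {r : ℝ} (hr : 0 ≤ r)
    (hν : ∀ y ∈ closedBall c r, ⟪y - x, ν⟫ ≤ 0) : r * ‖ν‖ ≤ ⟪x - c, ν⟫ := by
  rcases eq_or_ne ν 0 with rfl | hν0
  · simp
  have hy := hν (c + (r / ‖ν‖) • ν) (by simp [norm_smul, abs_of_nonneg hr, hν0])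
  rw [show c + (r / ‖ν‖) • ν - x = -(x - c) + (r / ‖ν‖) • ν by abel, inner_add_left,
    inner_neg_left, real_inner_smul_left, real_inner_self_eq_norm_sq] at hy
  have : r / ‖ν‖ * ‖ν‖ ^ 2 = r * ‖ν‖ := by field_simp
  linarith

open Fin.NatCast in
theorem four_le_sum_dist_of_forall_exists_inner_nonpos {m : ℕ} [NeZero m] {v : Fin m → E}
    (hv : ∀ i, ‖v i‖ = 1) (hhemi : ∀ w, ∃ i, ⟪w, v i⟫ ≤ 0) :
    4 ≤ ∑ i, dist (v i) (v (i + 1)) := by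
  set u : ℕ → E := fun j => v j with hu
  have hlen : ∑ j ∈ range m, dist (u j) (u (j + 1)) = ∑ i, dist (v i) (v (i + 1)) := by
    rw [← Fin.sum_univ_eq_sum_range]
    simp [hu, Fin.cast_val_eq_self]
  obtain ⟨p, hp⟩ := exists_dist_add_dist_le_half_length u (m := m) (by simp [hu])
  obtain ⟨i, hi⟩ := hhemi (v 0 + p)
  have hi' := hp i i.is_lt.le
  simp only [hu, Fin.cast_val_eq_self, Nat.cast_zero] at hi'
  rw [inner_add_left] at hi
  linarith [one_sub_inner_le_dist (hv i) (v 0), one_sub_inner_le_dist (hv i) p]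

end InnerProduct

section Billiard

variable {n m : ℕ} [NeZero m]

theorem norm_smul_dir (q : Fin m → Euc n) (i : Fin m) :
    ‖q (i + 1) - q i‖ • dir q i = q (i + 1) - q i := by
  rcases eq_or_ne (q (i + 1) - q i) 0 with h | h
  · simp [dir, h]
  · rw [dir, smul_smul, mul_inv_cancel₀ (norm_ne_zero_iff.2 h), one_smul]

theorem norm_dir {q : Fin m → Euc n} {i : Fin m} (h : q (i + 1) ≠ q i) : ‖dir q i‖ = 1 :=
  norm_smul_inv_norm (sub_ne_zero.2 h)

theorem inner_sub_dir (q : Fin m → Euc n) (i : Fin m) :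
    ⟪q (i + 1) - q i, dir q i⟫ = ‖q (i + 1) - q i‖ := by
  rw [dir, real_inner_smul_right, real_inner_self_eq_norm_sq]
  rcases eq_or_ne ‖q (i + 1) - q i‖ 0 with h | h
  · simp [h]
  · field_simp

theorem sum_norm_smul_dir (q : Fin m → Euc n) : ∑ i, ‖q (i + 1) - q i‖ • dir q i = 0 := by
  simp_rw [norm_smul_dir]
  rw [sum_sub_distrib, Fintype.sum_equiv (Equiv.addRight 1) (fun i => q (i + 1)) q fun _ => rfl,
    sub_self]

theorem polyLength_eq_sum_inner_normalVec (q : Fin m → Euc n) (c : Euc n) :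
    polyLength q = ∑ i, ⟪q i - c, normalVec q i⟫ := by
  simp_rw [normalVec, inner_sub_right, sum_sub_distrib]
  rw [← Equiv.sum_comp (Equiv.addRight (1 : Fin m)) (fun i => ⟪q i - c, dir q (i - 1)⟫),
    ← sum_sub_distrib, polyLength]
  refine sum_congr rfl fun i _ => ?_
  rw [Equiv.coe_addRight, add_sub_cancel_right, ← inner_sub_left, sub_sub_sub_cancel_right,
    inner_sub_dir]

theorem sum_norm_normalVec (q : Fin m → Euc n) :
    ∑ i, ‖normalVec q i‖ = ∑ i, dist (dir q i) (dir q (i + 1)) := by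
  rw [← Equiv.sum_comp (Equiv.addRight (1 : Fin m))]
  simp [normalVec, dist_eq_norm]

end Billiard

theorem stmt7 {n m : ℕ} [NeZero m] (c : Euc n) (r : ℝ) (hr : 0 < r)
    (q : Fin m → Euc n) (hq : IsBilliard (Metric.closedBall c r) q) :
    4 * r ≤ polyLength q := by
  obtain ⟨-, hne, -, hnormal⟩ := hq
  have hturn : 4 ≤ ∑ i, ‖normalVec q i‖ := by
    rw [sum_norm_normalVec]
    refine four_le_sum_dist_of_forall_exists_inner_nonpos (fun i => norm_dir (hne i)) ?_
    exact exists_inner_nonpos_of_sum_smul_eq_zero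
      (fun i => norm_pos_iff.2 (sub_ne_zero.2 (hne i))) (sum_norm_smul_dir q)
  calc 4 * r ≤ ∑ i, r * ‖normalVec q i‖ := by rw [← mul_sum]; nlinarith
    _ ≤ ∑ i, ⟪q i - c, normalVec q i⟫ := sum_le_sum fun i _ =>
        mul_norm_le_inner_of_forall_mem_closedBall hr.le (hnormal i).2
    _ = polyLength q := (polyLength_eq_sum_inner_normalVec q c).symm
end
end

section
/- Let B = closedBall(c, r) ⊆ ℝ^n with r > 0. If a periodic billiard trajectory q_1, …, q_m on B has length exactly 4r, then m = 2, q_1 + q_2 = 2c, and ‖q_1 − q_2‖ = 2r; that is, the trajectory is a bouncing ball orbit along a diameter of B. -/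
/-!
At each vertex the outer normal of the ball is radial, so the law of reflection on the sphere
forces all chords to have the same length `ℓ` and the centred vertices `pᵢ = qᵢ - c` to satisfy
`pᵢ₊₁ + pᵢ₋₁ = (2 - ℓ² / r²) pᵢ`. Hence `⟪p₀, pₖ⟫ = r² cos (k θ)` where `ℓ = 2 r sin (θ / 2)`.
Length `4 r` means `ℓ = 4 r / m`; for `m ≥ 3` Jordan's inequality gives `0 < m θ < 2 π`, which is
incompatible with `pₘ = p₀`. So `m = 2`, `ℓ = 2 r`, and the two vertices are antipodal.
-/

open scoped RealInnerProductSpace Pointwise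
open Metric

noncomputable section

open Real

section SphereGeometry

variable {E : Type*} [NormedAddCommGroup E] [InnerProductSpace ℝ E]

lemma two_mul_inner_sub_left_self_of_norm_eq {x y : E} (h : ‖x‖ = ‖y‖) :
    2 * ⟪x - y, x⟫ = ‖x - y‖ ^ 2 := by
  rw [norm_sub_sq_real, inner_sub_left, real_inner_self_eq_norm_sq, real_inner_comm, h]
  ring

lemma norm_sub_eq_and_exists_pos_smul_of_inner_sub_nonpos {c p ν : E} {r : ℝ} (hr : 0 < r)
    (hp : p ∈ closedBall c r) (hν : ν ≠ 0) (h : ∀ x ∈ closedBall c r, ⟪x - p, ν⟫ ≤ 0) :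
    ‖p - c‖ = r ∧ ∃ t : ℝ, 0 < t ∧ ν = t • (p - c) := by
  have hν₀ : 0 < ‖ν‖ := norm_pos_iff.mpr hν
  have hx : c + (r / ‖ν‖) • ν ∈ closedBall c r := by
    rw [mem_closedBall, dist_eq_norm, add_sub_cancel_left, norm_smul,
      Real.norm_of_nonneg (by positivity), div_mul_cancel₀ _ hν₀.ne']
  have hle : r * ‖ν‖ ≤ ⟪p - c, ν⟫ := by
    have := h _ hx
    rw [show c + (r / ‖ν‖) • ν - p = (r / ‖ν‖) • ν - (p - c) by abel, inner_sub_left,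
      real_inner_smul_left, real_inner_self_eq_norm_sq] at this
    field_simp at this
    linarith
  have hcs := real_inner_le_norm (p - c) ν
  have hpc : ‖p - c‖ ≤ r := by rwa [mem_closedBall, dist_eq_norm] at hp
  have hnorm : ‖p - c‖ = r := le_antisymm hpc (le_of_mul_le_mul_right (hle.trans hcs) hν₀)
  have heq : ‖ν‖ • (p - c) = r • ν :=
    hnorm ▸ inner_eq_norm_mul_iff_real.mp (le_antisymm hcs (hnorm ▸ hle))
  refine ⟨hnorm, ‖ν‖ / r, by positivity, ?_⟩
  rw [div_eq_inv_mul, mul_smul, heq, inv_smul_smul₀ hr.ne']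

lemma norm_sub_eq_and_add_eq_smul_of_reflection {p₀ p₁ p₂ : E} {r t : ℝ}
    (h₀ : ‖p₀‖ = r) (h₁ : ‖p₁‖ = r) (h₂ : ‖p₂‖ = r) (h₀₁ : p₁ ≠ p₀) (h₁₂ : p₂ ≠ p₁)
    (ht : t ≠ 0) (hν : ‖p₁ - p₀‖⁻¹ • (p₁ - p₀) - ‖p₂ - p₁‖⁻¹ • (p₂ - p₁) = t • p₁) :
    ‖p₂ - p₁‖ = ‖p₁ - p₀‖ ∧ p₂ + p₀ = (2 - ‖p₁ - p₀‖ ^ 2 / r ^ 2) • p₁ := by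
  set ℓ₁ := ‖p₁ - p₀‖
  set ℓ₂ := ‖p₂ - p₁‖
  have hℓ₁ : ℓ₁ ≠ 0 := norm_ne_zero_iff.mpr (sub_ne_zero.mpr h₀₁)
  have hℓ₂ : ℓ₂ ≠ 0 := norm_ne_zero_iff.mpr (sub_ne_zero.mpr h₁₂)
  have hu₁ : ⟪ℓ₁⁻¹ • (p₁ - p₀), p₁⟫ = ℓ₁ / 2 := by
    rw [real_inner_smul_left]
    field_simp
    linarith [two_mul_inner_sub_left_self_of_norm_eq (h₁.trans h₀.symm)]
  have hu₂ : ⟪ℓ₂⁻¹ • (p₂ - p₁), p₁⟫ = -(ℓ₂ / 2) := by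
    have h := two_mul_inner_sub_left_self_of_norm_eq (h₁.trans h₂.symm)
    rw [norm_sub_rev] at h
    rw [real_inner_smul_left, ← neg_sub, inner_neg_left]
    field_simp
    linarith
  -- comparing norms of the two unit vectors in `u₁ = u₂ + t p₁` gives `t r² = ℓ₂`
  have htr : t * r ^ 2 = ℓ₂ := by
    have hunit : ∀ v : E, v ≠ 0 → ‖‖v‖⁻¹ • v‖ = 1 := fun v hv => by
      rw [norm_smul, norm_inv, norm_norm, inv_mul_cancel₀ (norm_ne_zero_iff.mpr hv)]
    have hn₁ : ‖ℓ₁⁻¹ • (p₁ - p₀)‖ = 1 := hunit _ (sub_ne_zero.mpr h₀₁)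
    have hn₂ : ‖ℓ₂⁻¹ • (p₂ - p₁)‖ = 1 := hunit _ (sub_ne_zero.mpr h₁₂)
    have hnorm := congrArg (‖·‖ ^ 2) (eq_add_of_sub_eq' hν)
    simp only [norm_add_sq_real, hn₁, hn₂, real_inner_smul_right, hu₂, norm_smul, h₁,
      Real.norm_eq_abs, mul_pow, sq_abs] at hnorm
    have : t * (t * r ^ 2 - ℓ₂) = 0 := by linarith
    linarith [(mul_eq_zero.mp this).resolve_left ht]
  -- pairing `u₁ - u₂ = t p₁` with `p₁` gives `ℓ₁ + ℓ₂ = 2 t r²`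
  have hℓ : ℓ₂ = ℓ₁ := by
    have hpair := congrArg (⟪·, p₁⟫) hν
    simp only [inner_sub_left, hu₁, hu₂, real_inner_smul_left, real_inner_self_eq_norm_sq,
      h₁] at hpair
    linarith
  refine ⟨hℓ, ?_⟩
  have hr : r ^ 2 ≠ 0 := by
    rintro h
    exact hℓ₂ (by rw [← htr, h, mul_zero])
  have hedges : (p₁ - p₀) - (p₂ - p₁) = (ℓ₁ * t) • p₁ := by
    rw [mul_smul, ← hν, hℓ, smul_sub, smul_inv_smul₀ hℓ₁, smul_inv_smul₀ hℓ₁]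
  rw [eq_div_of_mul_eq hr (htr.trans hℓ)] at hedges
  linear_combination (norm := module) -hedges

lemma add_eq_zero_of_norm_sub_eq_two_mul {x y : E} {r : ℝ} (hx : ‖x‖ = r) (hy : ‖y‖ = r)
    (h : ‖x - y‖ = 2 * r) : x + y = 0 := by
  have := parallelogram_law_with_norm ℝ x y
  rw [hx, hy, h] at this
  exact norm_eq_zero.mp (pow_eq_zero_iff two_ne_zero |>.mp (by linarith))

end SphereGeometry

open Fin.NatCast in
lemma Fin.apply_eq_apply_zero_of_forall_apply_add_one_eq {α : Type*} {m : ℕ} [NeZero m]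
    {f : Fin m → α} (h : ∀ i, f (i + 1) = f i) (i : Fin m) : f i = f 0 := by
  have key : ∀ k : ℕ, f k = f 0 := by
    intro k
    induction k with
    | zero => rfl
    | succ k ih => rw [Nat.cast_succ, h, ih]
  simpa using key i

section Trigonometry

lemma eq_mul_cos_nat_mul_of_recurrence {x : ℕ → ℝ} {θ : ℝ} (h₁ : x 1 = x 0 * cos θ)
    (h : ∀ k, x (k + 2) + x k = 2 * cos θ * x (k + 1)) (k : ℕ) :
    x k = x 0 * cos (k * θ) := by
  induction k using Nat.twoStepInduction with
  | zero => simp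
  | one => simpa using h₁
  | more k ih₀ ih₁ =>
    have hk₁ : ((k + 1 : ℕ) : ℝ) * θ = k * θ + θ := by push_cast; ring
    have hk₂ : ((k + 2 : ℕ) : ℝ) * θ = k * θ + θ + θ := by push_cast; ring
    rw [hk₁, cos_add] at ih₁
    rw [hk₂, cos_add, cos_add, eq_sub_of_add_eq (h k), ih₀, ih₁, sin_add]
    linear_combination x 0 * cos (↑k * θ) * (sin_sq_add_cos_sq θ)

lemma cos_two_mul_arcsin {x : ℝ} (h₁ : -1 ≤ x) (h₂ : x ≤ 1) :
    cos (2 * arcsin x) = 1 - 2 * x ^ 2 := by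
  rw [cos_two_mul, cos_sq', sin_arcsin h₁ h₂]
  ring

lemma cos_nat_mul_two_mul_arcsin_two_div_ne_one {m : ℕ} (hm : 3 ≤ m) :
    cos (m * (2 * arcsin (2 / m))) ≠ 1 := by
  have hm₀ : (3 : ℝ) ≤ m := by exact_mod_cast hm
  have hpos : 0 < arcsin (2 / m) := arcsin_pos.mpr (by positivity)
  -- Jordan's inequality `2x/π < sin x` at `x = π/m`
  have hlt : arcsin (2 / m) < π / m := by
    have hπm : π / m < π / 2 := div_lt_div_of_pos_left pi_pos (by norm_num) (by linarith)
    have hjordan := mul_lt_sin (x := π / m) (by positivity) hπm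
    rw [arcsin_lt_iff_lt_sin ⟨by linarith [show 0 < 2 / (m : ℝ) by positivity],
      (div_le_one (by positivity)).mpr (by linarith)⟩
      ⟨by linarith [pi_pos, show 0 < π / m by positivity], hπm.le⟩]
    convert hjordan using 1
    field_simp
  have hlt' : m * (2 * arcsin (2 / m)) < 2 * π := by
    calc (m : ℝ) * (2 * arcsin (2 / m)) < m * (2 * (π / m)) := by gcongr
      _ = 2 * π := by field_simp
  have hpos' : 0 < m * (2 * arcsin (2 / m)) := by positivity
  rw [Ne, cos_eq_one_iff_of_lt_of_lt (by linarith [pi_pos]) hlt']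
  exact hpos'.ne'

end Trigonometry

namespace IsBilliard

variable {n m : ℕ} [NeZero m] {c : Euc n} {r : ℝ} {q : Fin m → Euc n}

lemma norm_sub_center_and_normalVec_eq_smul (hq : IsBilliard (closedBall c r) q) (hr : 0 < r)
    (i : Fin m) : ‖q i - c‖ = r ∧ ∃ t : ℝ, 0 < t ∧ normalVec q i = t • (q i - c) :=
  norm_sub_eq_and_exists_pos_smul_of_inner_sub_nonpos hr (hq.2.2.1 i) (hq.2.2.2 i).1 (hq.2.2.2 i).2

lemma norm_sub_center (hq : IsBilliard (closedBall c r) q) (hr : 0 < r) (i : Fin m) :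
    ‖q i - c‖ = r :=
  (hq.norm_sub_center_and_normalVec_eq_smul hr i).1

lemma closedBall_reflection (hq : IsBilliard (closedBall c r) q) (hr : 0 < r) (i : Fin m) :
    ‖q (i + 1 + 1) - q (i + 1)‖ = ‖q (i + 1) - q i‖ ∧
      q (i + 1 + 1) - c + (q i - c) = (2 - ‖q (i + 1) - q i‖ ^ 2 / r ^ 2) • (q (i + 1) - c) := by
  obtain ⟨h₁, t, ht, hν⟩ := hq.norm_sub_center_and_normalVec_eq_smul hr (i + 1)
  have := norm_sub_eq_and_add_eq_smul_of_reflection (hq.norm_sub_center hr i) h₁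
    (hq.norm_sub_center hr (i + 1 + 1))
    (sub_left_injective.ne (hq.2.1 i)) (sub_left_injective.ne (hq.2.1 (i + 1))) ht.ne'
    (by simpa only [sub_sub_sub_cancel_right, normalVec, dir, add_sub_cancel_right] using hν)
  simpa only [sub_sub_sub_cancel_right] using this

lemma norm_edge_eq (hq : IsBilliard (closedBall c r) q) (hr : 0 < r) (i : Fin m) :
    ‖q (i + 1) - q i‖ = ‖q 1 - q 0‖ := by
  simpa using Fin.apply_eq_apply_zero_of_forall_apply_add_one_eq
    (f := fun i => ‖q (i + 1) - q i‖) (fun i => (hq.closedBall_reflection hr i).1) i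

lemma polyLength_eq (hq : IsBilliard (closedBall c r) q) (hr : 0 < r) :
    polyLength q = m * ‖q 1 - q 0‖ := by
  simp [polyLength, hq.norm_edge_eq hr]

lemma add_sub_center_eq_smul (hq : IsBilliard (closedBall c r) q) (hr : 0 < r) (i : Fin m) :
    q (i + 1 + 1) - c + (q i - c) = (2 - ‖q 1 - q 0‖ ^ 2 / r ^ 2) • (q (i + 1) - c) := by
  rw [(hq.closedBall_reflection hr i).2, hq.norm_edge_eq hr]

open Fin.NatCast in
lemma inner_sub_center_eq_mul_cos (hq : IsBilliard (closedBall c r) q) (hr : 0 < r) {θ : ℝ}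
    (hθ : 2 * cos θ = 2 - ‖q 1 - q 0‖ ^ 2 / r ^ 2) (k : ℕ) :
    ⟪q 0 - c, q k - c⟫ = r ^ 2 * cos (k * θ) := by
  set x : ℕ → ℝ := fun k => ⟪q 0 - c, q k - c⟫
  have hx₀ : x 0 = r ^ 2 := by
    simp [x, hq.norm_sub_center hr 0]
  have hx₁ : x 1 = x 0 * cos θ := by
    have h := norm_sub_sq_real (q 1 - c) (q 0 - c)
    rw [sub_sub_sub_cancel_right, hq.norm_sub_center hr 0, hq.norm_sub_center hr 1,
      real_inner_comm] at h
    have : r ^ 2 * (2 * cos θ) = 2 * r ^ 2 - ‖q 1 - q 0‖ ^ 2 := by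
      rw [hθ]
      field_simp
    simp only [x, hx₀, Nat.cast_one]
    linarith
  have hrec : ∀ k, x (k + 2) + x k = 2 * cos θ * x (k + 1) := by
    intro k
    have h := congrArg (⟪q 0 - c, ·⟫) (hq.add_sub_center_eq_smul hr k)
    rw [inner_add_right, real_inner_smul_right, add_assoc, one_add_one_eq_two] at h
    simpa only [x, hθ, Nat.cast_add, Nat.cast_one, Nat.cast_ofNat] using h
  rw [← hx₀]
  exact eq_mul_cos_nat_mul_of_recurrence hx₁ hrec k

open Fin.NatCast in
lemma eq_two_of_polyLength_eq (hq : IsBilliard (closedBall c r) q) (hr : 0 < r)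
    (hlen : polyLength q = 4 * r) : m = 2 := by
  by_contra hm
  have hm₃ : 3 ≤ m := by have := hq.1; omega
  have hm₀ : (0 : ℝ) < m := by positivity
  have hℓ : ‖q 1 - q 0‖ = r * (4 / m) := by
    rw [hq.polyLength_eq hr] at hlen
    field_simp
    linarith
  have hcos : 2 * cos (2 * arcsin (2 / m)) = 2 - ‖q 1 - q 0‖ ^ 2 / r ^ 2 := by
    rw [cos_two_mul_arcsin (by linarith [show 0 < 2 / (m : ℝ) by positivity])
      ((div_le_one hm₀).mpr (by exact_mod_cast (by omega : 2 ≤ m))), hℓ]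
    field_simp
    ring
  have hcycle := hq.inner_sub_center_eq_mul_cos hr hcos m
  rw [Fin.natCast_self, real_inner_self_eq_norm_sq, hq.norm_sub_center hr 0] at hcycle
  exact cos_nat_mul_two_mul_arcsin_two_div_ne_one hm₃
    (by nlinarith [show 0 < r ^ 2 by positivity])

end IsBilliard

theorem stmt8 {n m : ℕ} [NeZero m] (c : Euc n) (r : ℝ) (hr : 0 < r)
    (q : Fin m → Euc n) (hq : IsBilliard (Metric.closedBall c r) q)
    (hlen : polyLength q = 4 * r) :
    m = 2 ∧ (∀ i : Fin m, q i + q (i + 1) = c + c) ∧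
      (∀ i : Fin m, ‖q i - q (i + 1)‖ = 2 * r) := by
  obtain rfl := hq.eq_two_of_polyLength_eq hr hlen
  have hdiam : ∀ i : Fin 2, ‖q i - q (i + 1)‖ = 2 * r := fun i => by
    rw [norm_sub_rev, hq.norm_edge_eq hr]
    rw [hq.polyLength_eq hr] at hlen
    push_cast at hlen
    linarith
  refine ⟨rfl, fun i => ?_, hdiam⟩
  have := add_eq_zero_of_norm_sub_eq_two_mul (hq.norm_sub_center hr i)
    (hq.norm_sub_center hr (i + 1)) (by rw [sub_sub_sub_cancel_right, hdiam])
  rw [← sub_eq_zero, ← this]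
  abel
end
end

section
/- Let K ⊆ ℝ^n be a convex body with inradius r(K). Then every periodic billiard trajectory on K has length ≥ 4·r(K). -/
open scoped RealInnerProductSpace Pointwise
open Metric

noncomputable section

/-- The inradius of a convex body: the supremum of radii of closed balls contained in it. -/
noncomputable def inradius {n : ℕ} (K : Set (Euc n)) : ℝ :=
  sSup {r : ℝ | 0 ≤ r ∧ ∃ c : Euc n, Metric.closedBall c r ⊆ K}

/-!
Every closed polygon of length `L` lies in a closed ball of radius `L / 4`: centre it at the
midpoint of a vertex `q₀` and the point `p` halfway along the polygon from `q₀`, since each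
vertex lies on one of the two arcs of length `L / 2` joining `q₀` to `p`. If `K` contained a
ball of radius `ρ > L / 4`, some translate `q + v` of a billiard trajectory would have all its
vertices in the interior of `K`. Each outer normal `νᵢ` then satisfies `⟪v, νᵢ⟫ < 0`,
which contradicts `∑ νᵢ = 0`.
-/

open Topology

section PathLength

variable {α E : Type*} [PseudoMetricSpace α] [NormedAddCommGroup E] [NormedSpace ℝ E]

def pathLength (f : ℕ → α) (k : ℕ) : ℝ :=
  ∑ j ∈ Finset.range k, dist (f j) (f (j + 1))

@[simp]
lemma pathLength_zero (f : ℕ → α) : pathLength f 0 = 0 := Finset.sum_range_zero _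

lemma pathLength_monotone (f : ℕ → α) : Monotone (pathLength f) :=
  monotone_nat_of_le_succ fun k => by
    simp [pathLength, Finset.sum_range_succ]

lemma pathLength_nonneg (f : ℕ → α) (k : ℕ) : 0 ≤ pathLength f k :=
  (pathLength_zero f).symm.trans_le (pathLength_monotone f k.zero_le)

lemma dist_le_pathLength_sub (f : ℕ → α) {i j : ℕ} (h : i ≤ j) :
    dist (f i) (f j) ≤ pathLength f j - pathLength f i := by
  simpa only [pathLength, ← Finset.sum_Ico_eq_sub _ h] using dist_le_Ico_sum_dist f h

lemma Monotone.exists_le_le_succ {β : Type*} [LinearOrder β] {s : ℕ → β} (hs : Monotone s)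
    {a : β} (h0 : s 0 ≤ a) {m : ℕ} (hm : a ≤ s m) : ∃ k, s k ≤ a ∧ a ≤ s (k + 1) := by
  classical
  have hex : ∃ j, a ≤ s j := ⟨m, hm⟩
  rcases hj : Nat.find hex with _ | k
  all_goals have hspec := Nat.find_spec hex; rw [hj] at hspec
  · exact ⟨0, h0, hspec.trans (hs (Nat.zero_le 1))⟩
  · exact ⟨k, (not_le.1 (Nat.find_min hex (hj ▸ k.lt_succ_self))).le, hspec⟩

lemma exists_dist_le_abs_pathLength_sub (f : ℕ → E) {a : ℝ} (ha : 0 ≤ a) {m : ℕ}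
    (hm : a ≤ pathLength f m) : ∃ p, ∀ i, dist (f i) p ≤ |pathLength f i - a| := by
  set s := pathLength f
  obtain ⟨k, hk, hk'⟩ := (pathLength_monotone f).exists_le_le_succ (by simpa [s]) hm
  obtain ⟨p, hkp, hpk⟩ := exists_dist_le_le (x := f k) (z := f (k + 1)) (sub_nonneg.2 hk)
    (sub_nonneg.2 hk') (by linarith [dist_le_pathLength_sub f k.le_succ])
  refine ⟨p, fun i => ?_⟩
  rcases le_or_gt i k with hi | hi
  · calc dist (f i) p ≤ dist (f i) (f k) + dist (f k) p := dist_triangle _ _ _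
      _ ≤ (s k - s i) + (a - s k) := add_le_add (dist_le_pathLength_sub f hi) hkp
      _ ≤ |s i - a| := by rw [abs_sub_comm]; exact (le_of_eq (by ring)).trans (le_abs_self _)
  · calc dist (f i) p ≤ dist p (f (k + 1)) + dist (f (k + 1)) (f i) := by
          rw [dist_comm (f i)]; exact dist_triangle _ _ _
      _ ≤ (s (k + 1) - a) + (s i - s (k + 1)) := add_le_add hpk (dist_le_pathLength_sub f hi)
      _ ≤ |s i - a| := (le_of_eq (by ring)).trans (le_abs_self _)

lemma exists_forall_dist_le_pathLength_div_four (f : ℕ → E) {m : ℕ} (hm : f m = f 0) :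
    ∃ c, ∀ i ≤ m, dist (f i) c ≤ pathLength f m / 4 := by
  set L := pathLength f m
  have hL : 0 ≤ L := pathLength_nonneg f m
  obtain ⟨p, hp⟩ := exists_dist_le_abs_pathLength_sub f (a := L / 2) (by positivity)
    (show L / 2 ≤ L by linarith)
  refine ⟨midpoint ℝ (f 0) p, fun i hi => ?_⟩
  have h₀ : dist (f i) (f 0) ≤ pathLength f i := by
    simpa [dist_comm] using dist_le_pathLength_sub f (Nat.zero_le i)
  have hm' : dist (f i) (f 0) ≤ L - pathLength f i := hm ▸ dist_le_pathLength_sub f hi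
  calc dist (f i) (midpoint ℝ (f 0) p)
      = dist (midpoint ℝ (f i) (f i)) (midpoint ℝ (f 0) p) := by rw [midpoint_self]
    _ ≤ (dist (f i) (f 0) + dist (f i) p) / 2 := dist_midpoint_midpoint_le _ _ _ _
    _ ≤ L / 4 := by cases abs_cases (pathLength f i - L / 2) <;> linarith [hp i]

end PathLength

open Fin.NatCast in
lemma polyLength_eq_pathLength {n m : ℕ} [NeZero m] (q : Fin m → Euc n) :
    polyLength q = pathLength (fun j : ℕ => q j) m := by
  rw [polyLength, pathLength,
    ← Fin.sum_univ_eq_sum_range (fun j : ℕ => dist (q j) (q ((j + 1 : ℕ) : Fin m)))]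
  refine Finset.sum_congr rfl fun i _ => ?_
  simp [dist_eq_norm', Fin.cast_val_eq_self]

open Fin.NatCast in
lemma exists_forall_dist_le_polyLength_div_four {n m : ℕ} [NeZero m] (q : Fin m → Euc n) :
    ∃ c, ∀ i, dist (q i) c ≤ polyLength q / 4 := by
  obtain ⟨c, hc⟩ := exists_forall_dist_le_pathLength_div_four (fun j : ℕ => q j) (m := m)
    (by simp)
  refine ⟨c, fun i => ?_⟩
  simpa [polyLength_eq_pathLength, Fin.cast_val_eq_self] using hc i i.isLt.le

lemma sum_normalVec_eq_zero {n m : ℕ} [NeZero m] (q : Fin m → Euc n) :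
    ∑ i, normalVec q i = 0 := by
  simp only [normalVec, Finset.sum_sub_distrib, sub_eq_zero]
  exact Fintype.sum_equiv (Equiv.subRight 1) _ _ fun _ => rfl

lemma inner_neg_of_add_mem_interior {F : Type*} [NormedAddCommGroup F] [InnerProductSpace ℝ F]
    {K : Set F} {p v ν : F} (hν : ν ≠ 0) (hK : ∀ x ∈ K, ⟪x - p, ν⟫ ≤ 0)
    (hv : p + v ∈ interior K) : ⟪v, ν⟫ < 0 := by
  have hpath : Filter.Tendsto (fun t : ℝ => p + v + t • ν) (𝓝[>] 0) (𝓝 (p + v)) :=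
    tendsto_nhdsWithin_of_tendsto_nhds <| (by fun_prop : Continuous _).tendsto' 0 _ (by simp)
  obtain ⟨t, ht, htK⟩ :=
    ((hpath.eventually (mem_interior_iff_mem_nhds.1 hv)).and self_mem_nhdsWithin).exists
  have := hK _ ht
  rw [show p + v + t • ν - p = v + t • ν by abel, inner_add_left, real_inner_smul_left,
    real_inner_self_eq_norm_sq] at this
  nlinarith [mul_pos (Set.mem_Ioi.1 htK) (pow_pos (norm_pos_iff.2 hν) 2)]

lemma IsBilliard.exists_add_notMem_interior {n m : ℕ} [NeZero m] {K : Set (Euc n)}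
    {q : Fin m → Euc n} (hq : IsBilliard K q) (v : Euc n) : ∃ i, q i + v ∉ interior K := by
  obtain ⟨-, -, -, hν⟩ := hq
  by_contra! h
  have hneg : ∑ i, ⟪v, normalVec q i⟫ < 0 :=
    Finset.sum_neg (fun i _ => inner_neg_of_add_mem_interior (hν i).1 (hν i).2 (h i))
      Finset.univ_nonempty
  rw [← inner_sum, sum_normalVec_eq_zero, inner_zero_right] at hneg
  exact hneg.false

lemma IsBilliard.le_polyLength_div_four {n m : ℕ} [NeZero m] {K : Set (Euc n)}
    {q : Fin m → Euc n} (hq : IsBilliard K q) {c : Euc n} {ρ : ℝ} (hρ : closedBall c ρ ⊆ K) :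
    ρ ≤ polyLength q / 4 := by
  by_contra! hlt
  obtain ⟨c₀, hc₀⟩ := exists_forall_dist_le_polyLength_div_four q
  obtain ⟨i, hi⟩ := hq.exists_add_notMem_interior (c - c₀)
  refine hi (interior_mono hρ (ball_subset_interior_closedBall ?_))
  rw [mem_ball, dist_eq_norm, show q i + (c - c₀) - c = q i - c₀ by abel, ← dist_eq_norm]
  exact (hc₀ i).trans_lt hlt

theorem stmt10_general {n m : ℕ} [NeZero m] (K : Set (Euc n))
    (q : Fin m → Euc n) (hq : IsBilliard K q) :
    4 * inradius K ≤ polyLength q := by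
  have hL : 0 ≤ polyLength q / 4 := by
    rw [polyLength_eq_pathLength]; exact div_nonneg (pathLength_nonneg _ _) zero_le_four
  have : inradius K ≤ polyLength q / 4 :=
    Real.sSup_le (fun _ ⟨_, _, hρ⟩ => hq.le_polyLength_div_four hρ) hL
  linarith

theorem stmt10 {n m : ℕ} [NeZero m] (K : Set (Euc n)) (hK : IsConvexBody K)
    (q : Fin m → Euc n) (hq : IsBilliard K q) :
    4 * inradius K ≤ polyLength q :=
  stmt10_general K q hq
end
end

section
/- Every closed polygon in ℝ^n of length L is contained, after a translation, in a closed ball of radius L/4: there exists x ∈ ℝ^n such that the image of the polygon is contained in closedBall(x, L/4). Equivalently, every closed polygon whose image has no translate contained in the open ball of radius r > 0 has length ≥ 4r. -/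
open scoped RealInnerProductSpace Pointwise
open Metric

noncomputable section

/-!
Cut the closed polygon, of length `L`, at its vertex `a = q 0` and at the point `b` half-way
around it. Measuring arc length from `a`, a point `p` at arc length `σ ∈ [0, L]` is within
`min σ (L - σ)` of `a` and within `|σ - L / 2|` of `b`; these add up to `L / 2`. Hence `p` lies
within `L / 4` of the midpoint of `a` and `b`.
-/

open AffineMap

section ArcLength

variable {V P : Type*} [SeminormedAddCommGroup V] [NormedSpace ℝ V] [PseudoMetricSpace P]
  [NormedAddTorsor V P]

lemma dist_midpoint_le (p a b : P) : dist p (midpoint ℝ a b) ≤ (dist p a + dist p b) / 2 := by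
  simpa [midpoint_self] using dist_midpoint_midpoint_le' (𝕜 := ℝ) p p a b

namespace Polyline

variable (Q : ℕ → P)

def length (k : ℕ) : ℝ := ∑ i ∈ Finset.range k, dist (Q i) (Q (i + 1))

def point (i : ℕ) (t : ℝ) : P := lineMap (Q i) (Q (i + 1)) t

/-- `point Q i t` lies at arc length `arcParam Q i t` from `Q 0` along the polyline. -/
def arcParam (i : ℕ) (t : ℝ) : ℝ := length Q i + t * dist (Q i) (Q (i + 1))

lemma length_succ (k : ℕ) : length Q (k + 1) = length Q k + dist (Q k) (Q (k + 1)) :=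
  Finset.sum_range_succ _ _

@[simp] lemma length_zero : length Q 0 = 0 := Finset.sum_range_zero _

lemma length_nonneg (k : ℕ) : 0 ≤ length Q k :=
  Finset.sum_nonneg fun _ _ => dist_nonneg

lemma length_mono : Monotone (length Q) :=
  monotone_nat_of_le_succ fun k => le_of_le_of_eq (le_add_of_nonneg_right dist_nonneg)
    (length_succ Q k).symm

lemma dist_le_length_sub {k l : ℕ} (hkl : k ≤ l) : dist (Q k) (Q l) ≤ length Q l - length Q k :=
  (dist_le_Ico_sum_dist Q hkl).trans_eq (Finset.sum_Ico_eq_sub _ hkl)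

@[simp] lemma point_zero (i : ℕ) : point Q i 0 = Q i := lineMap_apply_zero _ _

@[simp] lemma arcParam_zero (i : ℕ) : arcParam Q i 0 = length Q i := by simp [arcParam]

lemma arcParam_mem_Icc (i : ℕ) {t : ℝ} (ht : t ∈ Set.Icc (0 : ℝ) 1) :
    arcParam Q i t ∈ Set.Icc (length Q i) (length Q (i + 1)) := by
  have hd := dist_nonneg (x := Q i) (y := Q (i + 1))
  rw [arcParam, length_succ]
  constructor <;> nlinarith [ht.1, ht.2]

lemma dist_point_le_of_lt {i j : ℕ} (hij : i < j) {t t' : ℝ} (ht : t ∈ Set.Icc (0 : ℝ) 1)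
    (ht' : t' ∈ Set.Icc (0 : ℝ) 1) :
    dist (point Q i t) (point Q j t') ≤ arcParam Q j t' - arcParam Q i t := by
  have h₁ : dist (point Q i t) (Q (i + 1)) = length Q (i + 1) - arcParam Q i t := by
    rw [point, dist_lineMap_right, Real.norm_of_nonneg (by linarith [ht.2]), arcParam,
      length_succ]
    ring
  have h₂ : dist (Q j) (point Q j t') = arcParam Q j t' - length Q j := by
    rw [point, dist_left_lineMap, Real.norm_of_nonneg ht'.1, arcParam]
    ring
  calc dist (point Q i t) (point Q j t')
      ≤ dist (point Q i t) (Q (i + 1)) + dist (Q (i + 1)) (Q j) + dist (Q j) (point Q j t') :=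
        dist_triangle4 _ _ _ _
    _ ≤ arcParam Q j t' - arcParam Q i t := by
        linarith [dist_le_length_sub Q (Nat.succ_le_of_lt hij)]

lemma dist_point_le (i j : ℕ) {t t' : ℝ} (ht : t ∈ Set.Icc (0 : ℝ) 1)
    (ht' : t' ∈ Set.Icc (0 : ℝ) 1) :
    dist (point Q i t) (point Q j t') ≤ |arcParam Q j t' - arcParam Q i t| := by
  rcases lt_trichotomy i j with hij | rfl | hji
  · exact (dist_point_le_of_lt Q hij ht ht').trans (le_abs_self _)
  · rw [point, point, dist_lineMap_lineMap, Real.dist_eq, arcParam, arcParam,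
      add_sub_add_left_eq_sub, ← sub_mul, abs_mul, abs_of_nonneg dist_nonneg, abs_sub_comm]
  · rw [dist_comm, abs_sub_comm]
    exact (dist_point_le_of_lt Q hji ht' ht).trans (le_abs_self _)

lemma exists_arcParam_eq {σ : ℝ} (hσ : 0 ≤ σ) {k : ℕ} (hk : σ ≤ length Q k) :
    ∃ i, ∃ t ∈ Set.Icc (0 : ℝ) 1, arcParam Q i t = σ := by
  induction k with
  | zero =>
    obtain rfl : σ = 0 := le_antisymm (by simpa [length] using hk) hσ
    exact ⟨0, 0, by simp, by simp [length]⟩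
  | succ k ih =>
    by_cases hσk : σ ≤ length Q k
    · exact ih hσk
    push Not at hσk
    rw [length_succ] at hk
    have hd : 0 < dist (Q k) (Q (k + 1)) := by linarith
    refine ⟨k, (σ - length Q k) / dist (Q k) (Q (k + 1)), ⟨by positivity, ?_⟩, ?_⟩
    · rw [div_le_one hd]; linarith
    · rw [arcParam, div_mul_cancel₀ _ hd.ne']; ring

lemma exists_dist_le_quarter_length {m : ℕ} (hQ : Q m = Q 0) :
    ∃ c : P, ∀ i < m, ∀ t ∈ Set.Icc (0 : ℝ) 1, dist (point Q i t) c ≤ length Q m / 4 := by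
  have hL : 0 ≤ length Q m := length_nonneg Q m
  obtain ⟨j, s, hs, hjs⟩ := exists_arcParam_eq Q (by positivity) (half_le_self hL)
  refine ⟨midpoint ℝ (Q 0) (point Q j s), fun i hi t ht => ?_⟩
  have h₀ := dist_point_le Q i 0 ht (t' := 0) (by simp)
  have hm := dist_point_le Q i m ht (t' := 0) (by simp)
  have hb := dist_point_le Q i j ht hs
  rw [point_zero, arcParam_zero, length_zero, abs_sub_comm, sub_zero] at h₀
  rw [point_zero, arcParam_zero, hQ] at hm
  rw [hjs] at hb
  set L := length Q m
  set σ := arcParam Q i t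
  have hσ : σ ∈ Set.Icc 0 L := by
    have := arcParam_mem_Icc Q i ht
    exact ⟨(length_nonneg Q i).trans this.1, this.2.trans (length_mono Q hi)⟩
  rw [abs_of_nonneg hσ.1] at h₀
  rw [abs_of_nonneg (sub_nonneg.2 hσ.2)] at hm
  refine (dist_midpoint_le _ _ _).trans ?_
  rcases le_total σ (L / 2) with h | h
  · rw [abs_of_nonneg (by linarith)] at hb; linarith
  · rw [abs_of_nonpos (by linarith)] at hb; linarith

end Polyline

end ArcLength

section ClosedPolygon

/- The cast `ℕ → Fin m` reduces mod `m`, so `fun k : ℕ => q k` is the periodic extension of `q`,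
and the closed polygon is the polyline through its first `m + 1` vertices. -/
open Fin.NatCast

variable {n m : ℕ} [NeZero m] (q : Fin m → Euc n)

lemma natCast_succ_val (i : Fin m) : (((i : ℕ) + 1 : ℕ) : Fin m) = i + 1 := by
  rw [Nat.cast_succ, Fin.cast_val_eq_self]

lemma polyLength_eq_length : polyLength q = Polyline.length (fun k : ℕ => q k) m := by
  rw [polyLength, Polyline.length, ← Fin.sum_univ_eq_sum_range]
  refine Finset.sum_congr rfl fun i _ => ?_
  rw [natCast_succ_val, Fin.cast_val_eq_self, dist_eq_norm']

lemma exists_point_eq_of_mem_polyImage {p : Euc n} (hp : p ∈ polyImage q) :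
    ∃ i < m, ∃ t ∈ Set.Icc (0 : ℝ) 1, Polyline.point (fun k : ℕ => q k) i t = p := by
  obtain ⟨i, hi⟩ := Set.mem_iUnion.1 hp
  rw [segment_eq_image_lineMap] at hi
  obtain ⟨t, ht, rfl⟩ := hi
  exact ⟨i, i.isLt, t, ht, by rw [Polyline.point, natCast_succ_val, Fin.cast_val_eq_self]⟩

lemma exists_polyImage_subset_closedBall :
    ∃ x : Euc n, polyImage q ⊆ closedBall x (polyLength q / 4) := by
  obtain ⟨x, hx⟩ := Polyline.exists_dist_le_quarter_length (fun k : ℕ => q k) (m := m)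
    (by rw [Fin.natCast_self, Nat.cast_zero])
  refine ⟨x, fun p hp => ?_⟩
  obtain ⟨i, hi, t, ht, rfl⟩ := exists_point_eq_of_mem_polyImage q hp
  rw [mem_closedBall, polyLength_eq_length]
  exact hx i hi t ht

end ClosedPolygon

theorem stmt11 {n m : ℕ} [NeZero m] (q : Fin m → Euc n) :
    (∃ x : Euc n, polyImage q ⊆ Metric.closedBall x (polyLength q / 4)) ∧
      (∀ r : ℝ, 0 < r →
        (∀ x : Euc n, ¬ ((fun p => p + x) '' polyImage q ⊆ Metric.ball (0 : Euc n) r)) →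
        4 * r ≤ polyLength q) := by
  obtain ⟨x, hx⟩ := exists_polyImage_subset_closedBall q
  refine ⟨⟨x, hx⟩, fun r _ hr => ?_⟩
  by_contra! hlt
  refine hr (-x) ?_
  rintro _ ⟨p, hp, rfl⟩
  beta_reduce
  rw [mem_ball, dist_zero_right, ← sub_eq_add_neg, ← dist_eq_norm]
  linarith [mem_closedBall.1 (hx hp)]
end
end

section
/- Let K_1, K_2 be convex bodies in ℝ^n, let (q_i)_{i=1}^m be a periodic billiard trajectory on K_1, and suppose that for some a > 0 and x_0 ∈ ℝ^n the polygon (a·q_i + x_0)_{i=1}^m is a periodic billiard trajectory on K_2. Then the vertexwise-sum polygon ((1+a)·q_i + x_0)_{i=1}^m belongs to 𝒫⁺(K_1 + K_2), and its length equals the sum of the lengths of the two trajectories. -/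
open scoped RealInnerProductSpace Pointwise
open Metric

noncomputable section

open Filter Set Topology

/-! A translate of the sum polygon by `x` lying in the interior of `K₁ + K₂` would place each
vertex `q i + (a • q i + x₀) + x` there. The billiard normal `ν i` is shared by both trajectories
and is an outer normal of `K₁ + K₂` at `q i + (a • q i + x₀)`, so `⟪x, ν i⟫ < 0` for every `i`;
but the normals `ν i = u (i-1) - u i` telescope to `0`. The length identity holds edge by edge. -/

section OuterNormal

variable {E : Type*} [NormedAddCommGroup E] [InnerProductSpace ℝ E]

def IsOuterNormal (K : Set E) (p ν : E) : Prop :=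
  ∀ x ∈ K, ⟪x - p, ν⟫ ≤ 0

theorem IsOuterNormal.add {K₁ K₂ : Set E} {p₁ p₂ ν : E} (h₁ : IsOuterNormal K₁ p₁ ν)
    (h₂ : IsOuterNormal K₂ p₂ ν) : IsOuterNormal (K₁ + K₂) (p₁ + p₂) ν := by
  rintro _ ⟨x₁, hx₁, x₂, hx₂, rfl⟩
  rw [add_sub_add_comm, inner_add_left]
  linarith [h₁ x₁ hx₁, h₂ x₂ hx₂]

theorem IsOuterNormal.inner_sub_neg_of_mem_interior {K : Set E} {p ν y : E}
    (h : IsOuterNormal K p ν) (hν : ν ≠ 0) (hy : y ∈ interior K) : ⟪y - p, ν⟫ < 0 := by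
  have hpath : Tendsto (fun t : ℝ => y + t • ν) (𝓝 0) (𝓝 y) :=
    (show Continuous fun t : ℝ => y + t • ν by fun_prop).tendsto' 0 y (by simp)
  have hK : ∀ᶠ t in 𝓝[>] (0 : ℝ), y + t • ν ∈ K :=
    (hpath.eventually (mem_interior_iff_mem_nhds.1 hy)).filter_mono nhdsWithin_le_nhds
  obtain ⟨t, htK, ht⟩ := (hK.and self_mem_nhdsWithin).exists
  have hstep := h _ htK
  rw [add_sub_right_comm, inner_add_left, real_inner_smul_left,
    real_inner_self_eq_norm_sq] at hstep
  have : 0 < ‖ν‖ ^ 2 := by positivity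
  nlinarith

end OuterNormal

section Polygon

variable {n m : ℕ} [NeZero m]

theorem dir_smul_add (q : Fin m → Euc n) {a : ℝ} (ha : 0 < a) (x₀ : Euc n) :
    dir (fun i => a • q i + x₀) = dir q := by
  funext i
  simp only [dir, add_sub_add_right_eq_sub, ← smul_sub, norm_smul, Real.norm_of_nonneg ha.le,
    mul_inv, smul_smul]
  rw [mul_right_comm, inv_mul_cancel₀ ha.ne', one_mul]

theorem normalVec_smul_add (q : Fin m → Euc n) {a : ℝ} (ha : 0 < a) (x₀ : Euc n) :
    normalVec (fun i => a • q i + x₀) = normalVec q := by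
  funext i
  simp only [normalVec, dir_smul_add q ha]

theorem sum_normalVec (q : Fin m → Euc n) : ∑ i, normalVec q i = 0 := by
  simp only [normalVec, Finset.sum_sub_distrib]
  exact sub_eq_zero.2 ((Equiv.subRight 1).sum_comp (dir q))

theorem polyLength_smul_add (q : Fin m → Euc n) {a : ℝ} (ha : 0 ≤ a) (x₀ : Euc n) :
    polyLength (fun i => a • q i + x₀) = a * polyLength q := by
  simp only [polyLength, Finset.mul_sum, add_sub_add_right_eq_sub, ← smul_sub, norm_smul,
    Real.norm_of_nonneg ha]

theorem IsBilliard.isOuterNormal {K : Set (Euc n)} {q : Fin m → Euc n} (h : IsBilliard K q)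
    (i : Fin m) : IsOuterNormal K (q i) (normalVec q i) :=
  (h.2.2.2 i).2

theorem IsBilliard.normalVec_ne_zero {K : Set (Euc n)} {q : Fin m → Euc n} (h : IsBilliard K q)
    (i : Fin m) : normalVec q i ≠ 0 :=
  (h.2.2.2 i).1

end Polygon

theorem stmt15_general {n m : ℕ} [NeZero m] (K₁ K₂ : Set (Euc n))
    (q : Fin m → Euc n) (a : ℝ) (ha : 0 < a) (x₀ : Euc n)
    (h₁ : IsBilliard K₁ q)
    (h₂ : IsBilliard K₂ (fun i => a • q i + x₀)) :
    InPPlus (K₁ + K₂) (fun i => (1 + a) • q i + x₀) ∧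
      polyLength (fun i => (1 + a) • q i + x₀) =
        polyLength q + polyLength (fun i => a • q i + x₀) := by
  refine ⟨fun x hx => ?_, ?_⟩
  · have hvertex : ∀ i, q i + (a • q i + x₀) + x ∈ interior (K₁ + K₂) := fun i =>
      hx ⟨_, mem_iUnion.2 ⟨i, left_mem_segment ℝ _ _⟩, by simp only [add_smul, one_smul, add_assoc]⟩
    have hneg : ∀ i, ⟪x, normalVec q i⟫ < 0 := fun i => by
      have hnormal := (h₁.isOuterNormal i).add (normalVec_smul_add q ha x₀ ▸ h₂.isOuterNormal i)
      simpa only [add_sub_cancel_left] using hnormal.inner_sub_neg_of_mem_interior (h₁.normalVec_ne_zero i) (hvertex i)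
    have hsum := Finset.sum_neg (fun i _ => hneg i) Finset.univ_nonempty
    rw [← inner_sum, sum_normalVec, inner_zero_right] at hsum
    exact lt_irrefl _ hsum
  · rw [polyLength_smul_add q (by linarith) x₀, polyLength_smul_add q ha.le x₀]
    ring

theorem stmt15 {n m : ℕ} [NeZero m] (K₁ K₂ : Set (Euc n))
    (hK₁ : IsConvexBody K₁) (hK₂ : IsConvexBody K₂)
    (q : Fin m → Euc n) (a : ℝ) (ha : 0 < a) (x₀ : Euc n)
    (h₁ : IsBilliard K₁ q)
    (h₂ : IsBilliard K₂ (fun i => a • q i + x₀)) :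
    InPPlus (K₁ + K₂) (fun i => (1 + a) • q i + x₀) ∧
      polyLength (fun i => (1 + a) • q i + x₀) =
        polyLength q + polyLength (fun i => a • q i + x₀) :=
  stmt15_general K₁ K₂ q a ha x₀ h₁ h₂
end
end

section
/- Let S be a simplicial complex in a real vector space E (in the sense of Mathlib's Geometry.SimplicialComplex over ℝ) whose set of faces is finite and nonempty. Then there exists a family of continuous functions w_σ : S.space → [0,1], indexed by the faces σ of S, such that: (i) for every face σ, the support of w_σ (the closure in S.space of {x : w_σ(x) ≠ 0}) is contained in Star(σ) := ⋃ {intrinsicInterior ℝ (convexHull ℝ τ) : τ a face of S with σ ⊆ τ}; (ii) for any two distinct faces σ, σ' with the same cardinality, the supports of w_σ and w_{σ'} are disjoint; (iii) the sets w_σ^{-1}({1}), as σ ranges over all faces, cover S.space. -/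
/-!
Barycentric coordinates `bᵥ` are well defined on `S.space` (weights on two faces both agree
with weights on their common face, by the intersection axiom) and continuous (on each closed
face they are affine-basis coordinates, and there are finitely many faces). The vertices where
`bᵥ(x) > 0` form a face whose intrinsic interior contains `x`.

Call `σ` gap-separated at `x` with margin `c` if each vertex of `σ` has coordinate `≥ c` and beats
every vertex off `σ` by `≥ c`; `w_σ` is a product of ramps, nonzero only where `σ` is separated
with margin `ε` and equal to `1` where it is separated with margin `2ε`. Then (i) holds because
`σ` lies in the positive face of `x`, and (ii) because two distinct faces of the same size each
have a vertex beating the other's. For (iii), with `N` vertices and `δ = 2ε = 1 / (N + 1)²`, the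
largest coordinate is `≥ 1/N ≥ Nδ`, while the other `N - 1` coordinates miss some window
`[jδ, (j + 1)δ)` with `j < N`; the vertices above that window are separated with margin `δ`.
-/

open Finset Set

namespace AffineIndependent

section AffineSpace

variable {k V P ι : Type*} [Ring k] [AddCommGroup V] [Module k V] [AddTorsor V P] {p : ι → P}

noncomputable def affineBasisSpan [Nonempty ι] (hp : AffineIndependent k p) :
    AffineBasis ι k (affineSpan k (range p)) where
  toFun i := ⟨p i, subset_affineSpan k _ (mem_range_self i)⟩
  ind' := AffineIndependent.of_comp (affineSpan k (range p)).subtype hp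
  tot' := by
    rw [← affineSpan_coe_preimage_eq_top (k := k) (range p)]
    congr 1
    ext y
    simp [Subtype.ext_iff]

theorem affineBasisSpan_coord_eq [Fintype ι] [Nonempty ι] (hp : AffineIndependent k p)
    {w : ι → k} (hw : ∑ i, w i = 1) {y : affineSpan k (range p)}
    (hy : (y : P) = univ.affineCombination k p w) (i : ι) :
    hp.affineBasisSpan.coord i y = w i := by
  have : y = univ.affineCombination k hp.affineBasisSpan w :=
    Subtype.coe_injective <| hy.trans
      (map_affineCombination _ hp.affineBasisSpan w hw (affineSpan k (range p)).subtype).symm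
  rw [this, AffineBasis.coord_apply_combination_of_mem _ (mem_univ i) hw]

end AffineSpace

section Normed

variable {ι E : Type*} [Fintype ι] [NormedAddCommGroup E] [NormedSpace ℝ E] {p : ι → E}

theorem continuous_affineBasisSpan_coord [Nonempty ι] (hp : AffineIndependent ℝ p) (i : ι) :
    Continuous (hp.affineBasisSpan.coord i) :=
  have := hp.affineBasisSpan.finiteDimensional
  continuous_barycentric_coord hp.affineBasisSpan i

theorem affineCombination_mem_intrinsicInterior_convexHull (hp : AffineIndependent ℝ p)
    {w : ι → ℝ} (hw0 : ∀ i, 0 < w i) (hw1 : ∑ i, w i = 1) :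
    univ.affineCombination ℝ p w ∈ intrinsicInterior ℝ (convexHull ℝ (range p)) := by
  have : Nonempty ι := univ_nonempty_iff.1 (nonempty_of_sum_ne_zero (hw1.symm ▸ one_ne_zero))
  set B := hp.affineBasisSpan
  rw [intrinsicInterior, affineSpan_convexHull]
  refine ⟨⟨_, affineCombination_mem_affineSpan hw1 p⟩, ?_, rfl⟩
  have hU : IsOpen {y | ∀ i, 0 < B.coord i y} := by
    simp only [ofPred_forall]
    exact isOpen_iInter_of_finite fun i =>
      isOpen_lt continuous_const (hp.continuous_affineBasisSpan_coord i)
  refine interior_maximal (fun y hy => ?_) hU fun i => ?_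
  · have hy' : (y : E) = univ.affineCombination ℝ p (fun i => B.coord i y) := by
      conv_lhs => rw [← B.affineCombination_coord_eq_self y]
      exact map_affineCombination _ B _ (B.sum_coord_apply_eq_one y)
        (affineSpan ℝ (range p)).subtype
    rw [Set.mem_preimage, hy']
    exact affineCombination_mem_convexHull (fun i _ => (hy i).le) (B.sum_coord_apply_eq_one y)
  · rw [hp.affineBasisSpan_coord_eq hw1 rfl]
    exact hw0 i

theorem continuous_of_continuous_affineCombination (hp : AffineIndependent ℝ p) {X : Type*}
    [TopologicalSpace X] {W : X → ι → ℝ} (hW : ∀ x, ∑ i, W x i = 1)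
    (hc : Continuous fun x => univ.affineCombination ℝ p (W x)) : Continuous W := by
  refine continuous_pi fun i => ?_
  have : Nonempty ι := ⟨i⟩
  have hmem (x : X) := affineCombination_mem_affineSpan (hW x) p
  have hWi : (fun x => W x i) = fun x => hp.affineBasisSpan.coord i ⟨_, hmem x⟩ :=
    funext fun x => (hp.affineBasisSpan_coord_eq (hW x) rfl i).symm
  rw [hWi]
  exact (hp.continuous_affineBasisSpan_coord i).comp (hc.subtype_mk hmem)

end Normed

end AffineIndependent

structure IsConvexWeights {E : Type*} [AddCommGroup E] [Module ℝ E] (τ : Finset E)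
    (w : E → ℝ) (x : E) : Prop where
  nonneg : ∀ v, 0 ≤ w v
  eq_zero_of_notMem : ∀ v ∉ τ, w v = 0
  sum_eq_one : ∑ v ∈ τ, w v = 1
  sum_smul_eq : ∑ v ∈ τ, w v • v = x

namespace IsConvexWeights

section Module

variable {E : Type*} [AddCommGroup E] [Module ℝ E] {τ τ' : Finset E} {w w' : E → ℝ} {x : E}

theorem exists_of_mem_convexHull (hx : x ∈ convexHull ℝ (τ : Set E)) :
    ∃ w, IsConvexWeights τ w x := by
  classical
  obtain ⟨w, hw0, hw1, hwx⟩ := Finset.mem_convexHull'.1 hx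
  refine ⟨fun v => if v ∈ τ then w v else 0,
    ⟨fun v => ?_, fun v hv => if_neg hv, ?_, ?_⟩⟩
  · split_ifs with hv
    exacts [hw0 v hv, le_rfl]
  · rwa [sum_congr rfl fun v hv => if_pos hv]
  · rwa [sum_congr rfl fun v hv => by rw [if_pos hv]]

theorem mem_convexHull (h : IsConvexWeights τ w x) : x ∈ convexHull ℝ (τ : Set E) :=
  Finset.mem_convexHull'.2 ⟨w, fun v _ => h.nonneg v, h.sum_eq_one, h.sum_smul_eq⟩

theorem nonempty (h : IsConvexWeights τ w x) : τ.Nonempty :=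
  nonempty_of_sum_ne_zero (h.sum_eq_one.symm ▸ one_ne_zero)

theorem mono (h : IsConvexWeights τ w x) (hττ' : τ ⊆ τ') : IsConvexWeights τ' w x where
  nonneg := h.nonneg
  eq_zero_of_notMem v hv := h.eq_zero_of_notMem v fun hvτ => hv (hττ' hvτ)
  sum_eq_one := by
    rw [← sum_subset hττ' fun v _ hv => h.eq_zero_of_notMem v hv, h.sum_eq_one]
  sum_smul_eq := by
    rw [← sum_subset hττ' fun v _ hv => by rw [h.eq_zero_of_notMem v hv, zero_smul],
      h.sum_smul_eq]

theorem filter_pos [DecidablePred fun v => 0 < w v] (h : IsConvexWeights τ w x) :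
    IsConvexWeights {v ∈ τ | 0 < w v} w x where
  nonneg := h.nonneg
  eq_zero_of_notMem v hv := by
    by_contra hne
    by_cases hvτ : v ∈ τ
    · exact hv (mem_filter.2 ⟨hvτ, (h.nonneg v).lt_of_ne' hne⟩)
    · exact hne (h.eq_zero_of_notMem v hvτ)
  sum_eq_one := by
    rw [sum_filter_of_ne fun v _ hv => (h.nonneg v).lt_of_ne' hv, h.sum_eq_one]
  sum_smul_eq := by
    rw [sum_filter_of_ne fun v _ hv => (h.nonneg v).lt_of_ne' (left_ne_zero_of_smul hv),
      h.sum_smul_eq]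

theorem sum_coe_sort_eq_one (h : IsConvexWeights τ w x) : ∑ v : τ, w v = 1 :=
  (sum_coe_sort τ w).trans h.sum_eq_one

theorem affineCombination_eq (h : IsConvexWeights τ w x) :
    univ.affineCombination ℝ ((↑) : τ → E) (fun v => w v) = x := by
  rw [affineCombination_eq_linear_combination _ _ _ h.sum_coe_sort_eq_one,
    sum_coe_sort τ fun v => w v • v, h.sum_smul_eq]

theorem eq (hτ : AffineIndependent ℝ ((↑) : τ → E)) (h : IsConvexWeights τ w x)
    (h' : IsConvexWeights τ w' x) : w = w' := by
  have := hτ.indicator_eq_of_affineCombination_eq univ univ _ _ h.sum_coe_sort_eq_one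
    h'.sum_coe_sort_eq_one (h.affineCombination_eq.trans h'.affineCombination_eq.symm)
  simp only [coe_univ, indicator_univ] at this
  funext v
  by_cases hv : v ∈ τ
  · exact congrFun this ⟨v, hv⟩
  · rw [h.eq_zero_of_notMem v hv, h'.eq_zero_of_notMem v hv]

end Module

theorem mem_intrinsicInterior {E : Type*} [NormedAddCommGroup E] [NormedSpace ℝ E]
    {τ : Finset E} {w : E → ℝ} {x : E} (hτ : AffineIndependent ℝ ((↑) : τ → E))
    (h : IsConvexWeights τ w x) (hpos : ∀ v ∈ τ, 0 < w v) :
    x ∈ intrinsicInterior ℝ (convexHull ℝ (τ : Set E)) := by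
  have := hτ.affineCombination_mem_intrinsicInterior_convexHull (fun v => hpos v v.2)
    h.sum_coe_sort_eq_one
  rwa [h.affineCombination_eq, Subtype.range_coe] at this

end IsConvexWeights

namespace Geometry.SimplicialComplex

variable {E : Type*} [NormedAddCommGroup E] [NormedSpace ℝ E] (S : SimplicialComplex ℝ E)
  {τ : Finset E} {w : E → ℝ}

theorem exists_isConvexWeights (x : S.space) :
    ∃ w, ∃ τ ∈ S.faces, IsConvexWeights τ w x := by
  obtain ⟨τ, hτ, hx⟩ := mem_space_iff.1 x.2
  obtain ⟨w, hw⟩ := IsConvexWeights.exists_of_mem_convexHull hx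
  exact ⟨w, τ, hτ, hw⟩

noncomputable def baryCoord (x : S.space) : E → ℝ :=
  (S.exists_isConvexWeights x).choose

theorem exists_face_isConvexWeights_baryCoord (x : S.space) :
    ∃ τ ∈ S.faces, IsConvexWeights τ (S.baryCoord x) x :=
  (S.exists_isConvexWeights x).choose_spec

theorem baryCoord_nonneg (x : S.space) (v : E) : 0 ≤ S.baryCoord x v :=
  (S.exists_face_isConvexWeights_baryCoord x).choose_spec.2.nonneg v

theorem sum_baryCoord_eq_one {V : Finset E} (hV : ∀ τ ∈ S.faces, τ ⊆ V) (x : S.space) :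
    ∑ v ∈ V, S.baryCoord x v = 1 :=
  have ⟨τ, hτ, h⟩ := S.exists_face_isConvexWeights_baryCoord x
  (h.mono (hV τ hτ)).sum_eq_one

theorem baryCoord_eq {x : S.space} (hτ : τ ∈ S.faces) (h : IsConvexWeights τ w x) :
    S.baryCoord x = w := by
  classical
  obtain ⟨τ', hτ', h'⟩ := S.exists_face_isConvexWeights_baryCoord x
  have hx : (x : E) ∈ convexHull ℝ ((τ' ∩ τ : Finset E) : Set E) := by
    rw [coe_inter, ← S.convexHull_inter_convexHull hτ' hτ]
    exact ⟨h'.mem_convexHull, h.mem_convexHull⟩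
  obtain ⟨u, hu⟩ := IsConvexWeights.exists_of_mem_convexHull hx
  exact (h'.eq (S.indep hτ') (hu.mono inter_subset_left)).trans
    (h.eq (S.indep hτ) (hu.mono inter_subset_right)).symm

theorem isConvexWeights_baryCoord {x : S.space} (hτ : τ ∈ S.faces)
    (hx : (x : E) ∈ convexHull ℝ (τ : Set E)) : IsConvexWeights τ (S.baryCoord x) x := by
  obtain ⟨w, hw⟩ := IsConvexWeights.exists_of_mem_convexHull hx
  rwa [S.baryCoord_eq hτ hw]

theorem exists_face_superset_mem_intrinsicInterior {σ : Finset E} {x : S.space}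
    (hσ : ∀ v ∈ σ, 0 < S.baryCoord x v) :
    ∃ τ ∈ S.faces, σ ⊆ τ ∧
      (x : E) ∈ intrinsicInterior ℝ (convexHull ℝ (τ : Set E)) := by
  classical
  obtain ⟨τ, hτ, h⟩ := S.exists_face_isConvexWeights_baryCoord x
  have hpos := h.filter_pos
  have hface := S.down_closed hτ (filter_subset _ τ) hpos.nonempty
  refine ⟨_, hface, fun v hv => ?_,
    hpos.mem_intrinsicInterior (S.indep hface) fun v hv => (mem_filter.1 hv).2⟩
  by_contra hvτ
  exact (hσ v hv).ne' (hpos.eq_zero_of_notMem v hvτ)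

theorem continuousOn_baryCoord (hτ : τ ∈ S.faces) (v : E) :
    ContinuousOn (fun x => S.baryCoord x v)
      {x : S.space | (x : E) ∈ convexHull ℝ (τ : Set E)} := by
  rw [continuousOn_iff_continuous_domRestrict]
  have hw (x : {x : S.space | (x : E) ∈ convexHull ℝ (τ : Set E)}) :=
    S.isConvexWeights_baryCoord hτ x.2
  by_cases hv : v ∈ τ
  · have hcomb : Continuous fun x : {x : S.space | (x : E) ∈ convexHull ℝ (τ : Set E)} =>
        univ.affineCombination ℝ ((↑) : τ → E) (fun i => S.baryCoord x i) := by
      simp only [fun x => (hw x).affineCombination_eq]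
      fun_prop
    exact (continuous_apply (⟨v, hv⟩ : τ)).comp
      ((S.indep hτ).continuous_of_continuous_affineCombination
        (fun x => (hw x).sum_coe_sort_eq_one) hcomb)
  · convert continuous_const (y := (0 : ℝ)) with x
    exact (hw x).eq_zero_of_notMem v hv

theorem continuous_baryCoord (hfin : S.faces.Finite) : Continuous S.baryCoord := by
  have : Finite S.faces := hfin.to_subtype
  refine continuous_pi fun v => LocallyFinite.continuous
    (f := fun τ : S.faces => {x : S.space | (x : E) ∈ convexHull ℝ (τ : Set E)})
    (locallyFinite_of_finite _) ?_ (fun τ => ?_) fun τ => S.continuousOn_baryCoord τ.2 v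
  · refine eq_univ_of_forall fun x => ?_
    obtain ⟨τ, hτ, hx⟩ := mem_space_iff.1 x.2
    exact mem_iUnion.2 ⟨⟨τ, hτ⟩, hx⟩
  · exact ((τ : Finset E).finite_toSet.isClosed_convexHull ℝ).preimage continuous_subtype_val

end Geometry.SimplicialComplex

noncomputable def ramp (ε t : ℝ) : ℝ := max 0 (min 1 (t / ε - 1))

@[fun_prop]
theorem continuous_ramp (ε : ℝ) : Continuous (ramp ε) := by
  unfold ramp
  fun_prop

theorem ramp_mem_Icc (ε t : ℝ) : ramp ε t ∈ Icc (0 : ℝ) 1 :=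
  ⟨le_max_left _ _, max_le zero_le_one (min_le_left _ _)⟩

theorem lt_of_ramp_ne_zero {ε t : ℝ} (hε : 0 < ε) (h : ramp ε t ≠ 0) : ε < t := by
  by_contra! ht
  have : t / ε - 1 ≤ 0 := by rwa [sub_nonpos, div_le_one hε]
  exact h (max_eq_left ((min_le_right _ _).trans this))

theorem ramp_eq_one {ε t : ℝ} (hε : 0 < ε) (ht : 2 * ε ≤ t) : ramp ε t = 1 := by
  have : 1 ≤ t / ε - 1 := by
    rw [le_sub_iff_add_le, le_div_iff₀ hε]
    linarith
  rw [ramp, min_eq_left this, max_eq_right zero_le_one]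

theorem exists_lt_forall_notMem_Ico {ι : Type*} {s : Finset ι} {f : ι → ℝ}
    (hf : ∀ i ∈ s, 0 ≤ f i) {n : ℕ} (hs : #s < n) {δ : ℝ} (hδ : 0 < δ) :
    ∃ j < n, ∀ i ∈ s, f i ∉ Ico (j * δ) ((j + 1) * δ) := by
  have hcard : #(s.image fun i => ⌊f i / δ⌋₊) < #(range n) :=
    card_image_le.trans_lt (hs.trans_eq (card_range n).symm)
  obtain ⟨j, hj, hjs⟩ := exists_mem_notMem_of_card_lt_card hcard
  refine ⟨j, mem_range.1 hj, fun i hi hfi => hjs (mem_image.2 ⟨i, hi, ?_⟩)⟩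
  rwa [Nat.floor_eq_iff (div_nonneg (hf i hi) hδ.le), le_div_iff₀ hδ, div_lt_iff₀ hδ]

section GapWeight

variable {ι : Type*} [DecidableEq ι] (V σ : Finset ι) (a : ι → ℝ)

def IsGapSeparated (c : ℝ) : Prop :=
  ∀ u ∈ σ, c ≤ a u ∧ ∀ v ∈ V \ σ, c ≤ a u - a v

noncomputable def gapWeight (ε : ℝ) : ℝ :=
  ∏ u ∈ σ, (ramp ε (a u) * ∏ v ∈ V \ σ, ramp ε (a u - a v))

variable {V σ a}

theorem IsGapSeparated.eq_of_card_eq {σ' : Finset ι} {c : ℝ} (hc : 0 < c) (hσ : σ ⊆ V)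
    (hσ' : σ' ⊆ V) (h : IsGapSeparated V σ a c) (h' : IsGapSeparated V σ' a c)
    (hcard : #σ = #σ') : σ = σ' := by
  by_contra hne
  obtain ⟨u, huσ, huσ'⟩ :=
    Finset.not_subset.1 fun hsub => hne (eq_of_subset_of_card_le hsub hcard.ge)
  obtain ⟨u', hu'σ', hu'σ⟩ :=
    Finset.not_subset.1 fun hsub => hne (eq_of_subset_of_card_le hsub hcard.le).symm
  have h₁ := (h u huσ).2 u' (mem_sdiff.2 ⟨hσ' hu'σ', hu'σ⟩)
  have h₂ := (h' u' hu'σ').2 u (mem_sdiff.2 ⟨hσ huσ, huσ'⟩)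
  linarith

theorem exists_isGapSeparated (ha : ∀ v ∈ V, 0 ≤ a v) (hsum : ∑ v ∈ V, a v = 1) :
    ∃ σ : Finset ι, σ.Nonempty ∧ IsGapSeparated V σ a (1 / (#V + 1) ^ 2) := by
  set δ : ℝ := 1 / (#V + 1) ^ 2 with hδ_def
  have hδ : 0 < δ := by positivity
  have hV : V.Nonempty := nonempty_of_sum_ne_zero (hsum.symm ▸ one_ne_zero)
  obtain ⟨vmax, hvmax, hmax⟩ := exists_max_image V a hV
  have hvmax_ge : 1 ≤ #V * a vmax := by
    simpa [hsum] using sum_le_card_nsmul V a (a vmax) hmax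
  obtain ⟨j, hjN, hgap⟩ := exists_lt_forall_notMem_Ico (fun v hv => ha v (mem_of_mem_erase hv))
    (card_erase_lt_of_mem hvmax) hδ
  have hjδ : (j + 1) * δ ≤ a vmax := by
    have hj : (j + 1 : ℝ) ≤ #V := by exact_mod_cast hjN
    have : (#V : ℝ) * ((j + 1) * δ) ≤ 1 := by
      rw [hδ_def]
      field_simp
      nlinarith
    nlinarith
  refine ⟨{v ∈ V | (j + 1) * δ ≤ a v}, ⟨vmax, mem_filter.2 ⟨hvmax, hjδ⟩⟩,
    fun u hu => ?_⟩
  obtain ⟨-, hu⟩ := mem_filter.1 hu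
  refine ⟨(le_mul_of_one_le_left hδ.le (by linarith [j.cast_nonneg (α := ℝ)])).trans hu,
    fun v hv => ?_⟩
  obtain ⟨hvV, hvσ⟩ := mem_sdiff.1 hv
  have hlt : a v < (j + 1) * δ := lt_of_not_ge fun h => hvσ (mem_filter.2 ⟨hvV, h⟩)
  have hne : v ≠ vmax := by
    rintro rfl
    exact hvσ (mem_filter.2 ⟨hvV, hjδ⟩)
  have : a v < j * δ := lt_of_not_ge fun h => hgap v (mem_erase.2 ⟨hne, hvV⟩) ⟨h, hlt⟩
  linarith

theorem gapWeight_mem_Icc (ε : ℝ) : gapWeight V σ a ε ∈ Icc (0 : ℝ) 1 :=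
  unitInterval.prod_mem fun _ _ => unitInterval.mul_mem (ramp_mem_Icc _ _)
    (unitInterval.prod_mem fun _ _ => ramp_mem_Icc _ _)

theorem isGapSeparated_of_gapWeight_ne_zero {ε : ℝ} (hε : 0 < ε)
    (h : gapWeight V σ a ε ≠ 0) : IsGapSeparated V σ a ε := by
  intro u hu
  obtain ⟨hu₁, hu₂⟩ := mul_ne_zero_iff.1 (prod_ne_zero_iff.1 h u hu)
  exact ⟨(lt_of_ramp_ne_zero hε hu₁).le,
    fun v hv => (lt_of_ramp_ne_zero hε (prod_ne_zero_iff.1 hu₂ v hv)).le⟩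

theorem gapWeight_eq_one {ε : ℝ} (hε : 0 < ε) (h : IsGapSeparated V σ a (2 * ε)) :
    gapWeight V σ a ε = 1 :=
  prod_eq_one fun u hu => by
    rw [ramp_eq_one hε (h u hu).1, one_mul]
    exact prod_eq_one fun v hv => ramp_eq_one hε ((h u hu).2 v hv)

variable {X : Type*} [TopologicalSpace X] {b : X → ι → ℝ}

theorem isClosed_setOf_isGapSeparated (hb : Continuous b) (c : ℝ) :
    IsClosed {x | IsGapSeparated V σ (b x) c} := by
  simp only [IsGapSeparated, ofPred_forall, ofPred_and]
  exact isClosed_biInter fun u _ => (isClosed_le continuous_const (by fun_prop)).inter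
    (isClosed_biInter fun v _ => isClosed_le continuous_const (by fun_prop))

theorem continuous_gapWeight (hb : Continuous b) (ε : ℝ) :
    Continuous fun x => gapWeight V σ (b x) ε := by
  unfold gapWeight
  fun_prop

theorem closure_setOf_gapWeight_ne_zero_subset (hb : Continuous b) {ε : ℝ} (hε : 0 < ε) :
    closure {x | gapWeight V σ (b x) ε ≠ 0} ⊆ {x | IsGapSeparated V σ (b x) ε} :=
  closure_minimal (fun _ hx => isGapSeparated_of_gapWeight_ne_zero hε hx)
    (isClosed_setOf_isGapSeparated hb ε)

end GapWeight

theorem stmt17_general {E : Type*} [NormedAddCommGroup E] [NormedSpace ℝ E]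
    (S : Geometry.SimplicialComplex ℝ E)
    (hfin : S.faces.Finite) :
    ∃ w : S.faces → (S.space → ℝ),
      (∀ σ : S.faces, Continuous (w σ)) ∧
      (∀ (σ : S.faces) (x : S.space), w σ x ∈ Set.Icc (0 : ℝ) 1) ∧
      -- (i): support of `w σ` is contained in `Star(σ)`
      (∀ (σ : S.faces), ∀ x ∈ closure {y : S.space | w σ y ≠ 0},
        ∃ τ ∈ S.faces, (σ : Finset E) ⊆ τ ∧
          (x : E) ∈ intrinsicInterior ℝ (convexHull ℝ (τ : Set E))) ∧
      -- (ii): faces of equal cardinality have disjoint supports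
      (∀ σ σ' : S.faces, σ ≠ σ' → (σ : Finset E).card = (σ' : Finset E).card →
        closure {y : S.space | w σ y ≠ 0} ∩ closure {y : S.space | w σ' y ≠ 0} = ∅) ∧
      -- (iii): the sets `w σ ⁻¹' {1}` cover `S.space`
      (∀ x : S.space, ∃ σ : S.faces, w σ x = 1) := by
  classical
  obtain ⟨V, hV⟩ : ∃ V : Finset E, ∀ τ ∈ S.faces, τ ⊆ V :=
    ⟨hfin.toFinset.sup id, fun τ hτ => le_sup (f := id) (hfin.mem_toFinset.2 hτ)⟩
  set δ : ℝ := 1 / (#V + 1) ^ 2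
  have hδ : 0 < δ := by positivity
  have hε : 0 < δ / 2 := half_pos hδ
  have hb := S.continuous_baryCoord hfin
  have hsupp (σ : Finset E) := closure_setOf_gapWeight_ne_zero_subset (V := V) (σ := σ) hb hε
  refine ⟨fun σ x => gapWeight V σ (S.baryCoord x) (δ / 2),
    fun σ => continuous_gapWeight hb _, fun σ x => gapWeight_mem_Icc _,
    fun σ x hx => ?_, fun σ σ' hne hcard => ?_, fun x => ?_⟩
  · exact S.exists_face_superset_mem_intrinsicInterior fun u hu =>
      hε.trans_le (hsupp σ hx u hu).1
  · refine eq_empty_of_forall_notMem fun x ⟨hx, hx'⟩ => hne (Subtype.ext ?_)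
    exact (hsupp σ hx).eq_of_card_eq hε (hV _ σ.2) (hV _ σ'.2) (hsupp σ' hx') hcard
  · obtain ⟨σ, hσne, hsep⟩ :=
      exists_isGapSeparated (fun v _ => S.baryCoord_nonneg x v) (S.sum_baryCoord_eq_one hV x)
    obtain ⟨τ, hτ, hστ, -⟩ :=
      S.exists_face_superset_mem_intrinsicInterior fun u hu => hδ.trans_le (hsep u hu).1
    exact ⟨⟨σ, S.down_closed hτ hστ hσne⟩,
      gapWeight_eq_one hε (by rwa [mul_div_cancel₀ _ two_ne_zero])⟩

theorem stmt17 {E : Type*} [NormedAddCommGroup E] [NormedSpace ℝ E]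
    (S : Geometry.SimplicialComplex ℝ E)
    (hfin : S.faces.Finite) (hne : S.faces.Nonempty) :
    ∃ w : S.faces → (S.space → ℝ),
      (∀ σ : S.faces, Continuous (w σ)) ∧
      (∀ (σ : S.faces) (x : S.space), w σ x ∈ Set.Icc (0 : ℝ) 1) ∧
      -- (i): support of `w σ` is contained in `Star(σ)`
      (∀ (σ : S.faces), ∀ x ∈ closure {y : S.space | w σ y ≠ 0},
        ∃ τ ∈ S.faces, (σ : Finset E) ⊆ τ ∧
          (x : E) ∈ intrinsicInterior ℝ (convexHull ℝ (τ : Set E))) ∧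
      -- (ii): faces of equal cardinality have disjoint supports
      (∀ σ σ' : S.faces, σ ≠ σ' → (σ : Finset E).card = (σ' : Finset E).card →
        closure {y : S.space | w σ y ≠ 0} ∩ closure {y : S.space | w σ' y ≠ 0} = ∅) ∧
      -- (iii): the sets `w σ ⁻¹' {1}` cover `S.space`
      (∀ x : S.space, ∃ σ : S.faces, w σ x = 1) :=
  stmt17_general S hfin
end
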